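/- arXiv:2210.05607 — 6 statements merged into one kernel-verified Lean document; each statement's English description precedes it below -/
import Mathlib

section
/- There exists a constant δ* > 2 (depending only on the step size α > 0 and on β₂ ∈ [0,1)) such that for every δ > δ* and every initial point w₁ ∈ ℝ, the ADAM iterates (w_t) applied to the stochastic optimization problem OP(δ) fail to converge in expectation to the optimal value: it is NOT the case that E[F(w_t)] → F*, where F* = min_w F(w) = F(−δ²). -/
open MeasureTheory Filter

/-- The stochastic gradient oracle of the problem OP(δ):
`G(w;1) = w/δ + δ⁴` (sampled with probability `(1+δ)/(1+δ⁴)`) and `G(w;2) = w/δ - 1`.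
We encode the outcome `ξ = 1` by `true` and `ξ = 2` by `false`. -/
noncomputable def OPgrad (δ w : ℝ) (ξ : Bool) : ℝ :=
  if ξ then w / δ + δ ^ 4 else w / δ - 1

/-- The population loss of OP(δ): `F(w) = w²/(2δ) + δ·w`, minimized at `w* = -δ²`. -/
noncomputable def OPloss (δ w : ℝ) : ℝ :=
  w ^ 2 / (2 * δ) + δ * w

/-!
Every ADAM step has length at most `α / √(1 - β₂)`, because `v_t ≥ (1 - β₂) g_t²`. Hence an
iterate near the minimizer `-δ²` has a bounded past, and `v_t` is bounded by a constant depending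
only on `α, β₂, δ`. The gradient of the second loss is `w/δ - 1 < 0` to the left of `δ`, so a run
of `k` consecutive samples `ξ = 2`, with `k` depending only on these constants, pushes such an
iterate at least `2` to the right of `-δ²`; the run has probability `q^k > 0` and is independent
of the past. If `E[F(w_t)] → F*`, then `E[(w_t + δ²)²] = 2δ (E[F(w_t)] - F*) → 0`, so for large
`t` the iterate is near `-δ²` with probability close to `1`, and `E[(w_{t+k} + δ²)²]` stays
above `2 q^k`: a contradiction.
-/

open ProbabilityTheory Finset
open scoped ENNReal

/-- Indices start at `1` as in the paper: `W 0` and `g 0` play no role. -/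
structure IsAdamRun (α β : ℝ) (g W V : ℕ → ℝ) : Prop where
  v_zero : V 0 = 0
  v_succ : ∀ t, V (t + 1) = β * V t + (1 - β) * g (t + 1) ^ 2
  w_succ : ∀ t, 1 ≤ t → W (t + 1) = W t - α * g t / √(V t)

theorem abs_div_sqrt_le_of_mul_sq_le {b x y : ℝ} (hb : 0 < b) (h : b * x ^ 2 ≤ y) :
    |x / √y| ≤ 1 / √b := by
  rcases le_or_gt y 0 with hy | hy
  · rw [Real.sqrt_eq_zero'.2 hy, div_zero, abs_zero]
    positivity
  rw [abs_div, abs_of_pos (Real.sqrt_pos.2 hy), div_le_div_iff₀ (Real.sqrt_pos.2 hy)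
    (Real.sqrt_pos.2 hb), one_mul]
  calc |x| * √b = √(b * x ^ 2) := by rw [Real.sqrt_mul hb.le, Real.sqrt_sq_eq_abs, mul_comm]
    _ ≤ √y := Real.sqrt_le_sqrt h

namespace IsAdamRun

variable {α β : ℝ} {g W V : ℕ → ℝ}

theorem v_eq_sum (h : IsAdamRun α β g W V) (t : ℕ) :
    V t = (1 - β) * ∑ j ∈ range t, β ^ j * g (t - j) ^ 2 := by
  induction t with
  | zero => simp [h.v_zero]
  | succ t ih =>
    rw [h.v_succ, ih, sum_range_succ', mul_add, Finset.mul_sum, Finset.mul_sum, Finset.mul_sum]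
    simp only [Nat.add_sub_add_right, Nat.sub_zero, pow_zero, one_mul]
    congr 1
    exact sum_congr rfl fun j _ => by ring

theorem v_nonneg (h : IsAdamRun α β g W V) (hβ0 : 0 ≤ β) (hβ1 : β ≤ 1) (t : ℕ) : 0 ≤ V t := by
  rw [h.v_eq_sum]
  exact mul_nonneg (by linarith) (sum_nonneg fun j _ => by positivity)

theorem mul_sq_le_v (h : IsAdamRun α β g W V) (hβ0 : 0 ≤ β) (hβ1 : β ≤ 1) {t : ℕ}
    (ht : 1 ≤ t) : (1 - β) * g t ^ 2 ≤ V t := by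
  obtain ⟨s, rfl⟩ : ∃ s, t = s + 1 := ⟨t - 1, by omega⟩
  rw [h.v_succ]
  have := mul_nonneg hβ0 (h.v_nonneg hβ0 hβ1 s)
  linarith

theorem abs_step_le (h : IsAdamRun α β g W V) (hα : 0 ≤ α) (hβ0 : 0 ≤ β) (hβ1 : β < 1)
    {t : ℕ} (ht : 1 ≤ t) : |W (t + 1) - W t| ≤ α / √(1 - β) := by
  have hstep : W (t + 1) - W t = -(α * (g t / √(V t))) := by rw [h.w_succ t ht]; ring
  rw [hstep, abs_neg, abs_mul, abs_of_nonneg hα, div_eq_mul_one_div α]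
  exact mul_le_mul_of_nonneg_left
    (abs_div_sqrt_le_of_mul_sq_le (by linarith) (h.mul_sq_le_v hβ0 hβ1.le ht)) hα

theorem abs_sub_le_mul (h : IsAdamRun α β g W V) (hα : 0 ≤ α) (hβ0 : 0 ≤ β) (hβ1 : β < 1)
    {s : ℕ} (hs : 1 ≤ s) (d : ℕ) : |W (s + d) - W s| ≤ α / √(1 - β) * d := by
  induction d with
  | zero => simp
  | succ d ih =>
    have hstep := h.abs_step_le hα hβ0 hβ1 (t := s + d) (by omega)
    calc |W (s + (d + 1)) - W s| ≤ |W (s + d + 1) - W (s + d)| + |W (s + d) - W s| :=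
          abs_sub_le _ _ _
      _ ≤ α / √(1 - β) * (d + 1 : ℕ) := by push_cast; linarith

end IsAdamRun

theorem summable_sq_add_mul_mul_geometric {a b r : ℝ} (hr0 : 0 ≤ r) (hr1 : r < 1) :
    Summable fun j : ℕ => (a + b * j) ^ 2 * r ^ j := by
  have hr : ‖r‖ < 1 := by rwa [Real.norm_of_nonneg hr0]
  have h := ((summable_pow_mul_geometric_of_norm_lt_one 0 hr).mul_left (a ^ 2)).add
    (((summable_pow_mul_geometric_of_norm_lt_one 1 hr).mul_left (2 * a * b)).add
      ((summable_pow_mul_geometric_of_norm_lt_one 2 hr).mul_left (b ^ 2)))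
  refine h.congr fun j => ?_
  ring

theorem abs_OPgrad_le {δ : ℝ} (hδ : 1 ≤ δ) (x : ℝ) (b : Bool) :
    |OPgrad δ x b| ≤ |x| / δ + δ ^ 4 := by
  have hx : |x / δ| = |x| / δ := by rw [abs_div, abs_of_pos (show (0 : ℝ) < δ by linarith)]
  have hδ4 : 1 ≤ δ ^ 4 := one_le_pow₀ hδ
  cases b
  · calc |x / δ - 1| ≤ |x / δ| + |1| := abs_sub _ _
      _ ≤ |x| / δ + δ ^ 4 := by rw [hx, abs_one]; linarith
  · calc |x / δ + δ ^ 4| ≤ |x / δ| + |δ ^ 4| := abs_add_le _ _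
      _ = |x| / δ + δ ^ 4 := by rw [hx, abs_of_nonneg (show (0 : ℝ) ≤ δ ^ 4 by positivity)]

theorem OP_prob_lt_one {δ : ℝ} (hδ : 1 < δ) : (1 + δ) / (1 + δ ^ 4) < 1 := by
  have hpow : δ ^ 1 < δ ^ 4 := pow_lt_pow_right₀ hδ (by norm_num)
  rw [div_lt_one (by positivity), pow_one] at *
  linarith

theorem OPloss_eq {δ : ℝ} (hδ : δ ≠ 0) (x : ℝ) :
    OPloss δ x = (x + δ ^ 2) ^ 2 / (2 * δ) + OPloss δ (-δ ^ 2) := by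
  unfold OPloss
  field_simp
  ring

/-- Bounds `V s` whenever `|W s| ≤ δ² + 1`: `j` steps earlier the iterate was at most
`j α / √(1 - β)` further out, and its gradient enters `V s` with weight `(1 - β) β ^ j`. -/
noncomputable def OPvBound (α β δ : ℝ) : ℝ :=
  (1 - β) * ∑' j : ℕ, ((δ ^ 2 + 1) / δ + δ ^ 4 + α / √(1 - β) / δ * j) ^ 2 * β ^ j

section OPRun

variable {α β δ : ℝ} {W V : ℕ → ℝ} {X : ℕ → Bool}

theorem OPvBound_pos (hβ0 : 0 ≤ β) (hβ1 : β < 1) (hδ : 0 < δ) : 0 < OPvBound α β δ := by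
  refine mul_pos (by linarith) ((summable_sq_add_mul_mul_geometric hβ0 hβ1).tsum_pos
    (fun j => by positivity) 0 ?_)
  simp only [Nat.cast_zero, mul_zero, add_zero, pow_zero, mul_one]
  positivity

theorem v_le_OPvBound (hrun : IsAdamRun α β (fun t => OPgrad δ (W t) (X t)) W V)
    (hα : 0 ≤ α) (hβ0 : 0 ≤ β) (hβ1 : β < 1) (hδ : 1 ≤ δ) {s : ℕ} (hW : |W s| ≤ δ ^ 2 + 1) :
    V s ≤ OPvBound α β δ := by
  rw [hrun.v_eq_sum, OPvBound]
  refine mul_le_mul_of_nonneg_left ?_ (by linarith)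
  refine (sum_le_sum fun j hj => ?_).trans ((summable_sq_add_mul_mul_geometric hβ0 hβ1).sum_le_tsum
    _ fun _ _ => by positivity)
  have hjs : j < s := mem_range.1 hj
  have hWj : |W (s - j)| ≤ δ ^ 2 + 1 + α / √(1 - β) * j := by
    have hdrift := hrun.abs_sub_le_mul hα hβ0 hβ1 (s := s - j) (by omega) j
    rw [Nat.sub_add_cancel hjs.le] at hdrift
    have := abs_sub_abs_le_abs_sub (W (s - j)) (W s)
    rw [abs_sub_comm] at this
    linarith
  have hg : |OPgrad δ (W (s - j)) (X (s - j))| ≤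
      (δ ^ 2 + 1) / δ + δ ^ 4 + α / √(1 - β) / δ * j := by
    refine (abs_OPgrad_le hδ _ _).trans ?_
    have : |W (s - j)| / δ ≤ (δ ^ 2 + 1 + α / √(1 - β) * j) / δ := by gcongr
    rw [add_div, mul_div_right_comm] at this
    linarith
  have hg2 := pow_le_pow_left₀ (abs_nonneg _) hg 2
  rw [sq_abs] at hg2
  rw [mul_comm]
  exact mul_le_mul_of_nonneg_right hg2 (by positivity)

/-- On the outcome `false` the iterate moves towards `δ`: while it is negative, the bound on `V`
makes it climb by at least `α / √(OPvBound α β δ)`, and from beyond `δ` it cannot fall below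
`δ - α / √(1 - β) > 0`. -/
theorem OP_step_of_false (hrun : IsAdamRun α β (fun t => OPgrad δ (W t) (X t)) W V)
    (hα : 0 < α) (hβ0 : 0 ≤ β) (hβ1 : β < 1) (hδ : α / √(1 - β) + 3 < δ)
    {s : ℕ} (hs : 1 ≤ s) (hX : X s = false) {L : ℝ} (hL : -δ ^ 2 - 1 ≤ L)
    (hlo : L ≤ W s) (hhi : W s ≤ δ + α / √(1 - β)) :
    min (L + α / √(OPvBound α β δ)) 0 ≤ W (s + 1) ∧ W (s + 1) ≤ δ + α / √(1 - β) := by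
  have hC : 0 ≤ α / √(1 - β) := by positivity
  have hδ0 : 0 < δ := by linarith
  have hgrad : OPgrad δ (W s) (X s) = W s / δ - 1 := by rw [hX]; rfl
  have hstep : W (s + 1) - W s = α * (1 - W s / δ) / √(V s) := by
    rw [hrun.w_succ s hs, hgrad]; ring
  have hbound := abs_le.1 (hrun.abs_step_le hα.le hβ0 hβ1 hs)
  rcases le_or_gt (W s) δ with hWδ | hWδ
  · have hup : 0 ≤ W (s + 1) - W s := by
      rw [hstep]
      have : W s / δ ≤ 1 := (div_le_one hδ0).2 hWδ
      exact div_nonneg (mul_nonneg hα.le (by linarith)) (Real.sqrt_nonneg _)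
    refine ⟨?_, by linarith⟩
    rcases lt_or_ge (W s) 0 with hneg | hnonneg
    · have hg1 : 1 ≤ 1 - W s / δ := by linarith [div_neg_of_neg_of_pos hneg hδ0]
      have hV := v_le_OPvBound hrun hα.le hβ0 hβ1 (by linarith) (s := s)
        (abs_le.2 ⟨by linarith, by nlinarith⟩)
      have hVpos : 0 < V s := by
        have := hrun.mul_sq_le_v hβ0 hβ1.le hs
        simp only [hgrad] at this
        have hsq : 0 < (W s / δ - 1) ^ 2 := by nlinarith
        nlinarith [mul_pos (sub_pos.2 hβ1) hsq]
      have hclimb : α / √(OPvBound α β δ) ≤ W (s + 1) - W s := by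
        rw [hstep, mul_comm α, mul_div_assoc]
        calc α / √(OPvBound α β δ) ≤ α / √(V s) :=
              div_le_div_of_nonneg_left hα.le (Real.sqrt_pos.2 hVpos) (Real.sqrt_le_sqrt hV)
          _ ≤ (1 - W s / δ) * (α / √(V s)) := le_mul_of_one_le_left (by positivity) hg1
      linarith [min_le_left (L + α / √(OPvBound α β δ)) 0]
    · linarith [min_le_right (L + α / √(OPvBound α β δ)) 0]
  · have hdown : W (s + 1) - W s ≤ 0 := by
      rw [hstep]
      have : 1 < W s / δ := (one_lt_div hδ0).2 hWδ
      exact div_nonpos_of_nonpos_of_nonneg (mul_nonpos_of_nonneg_of_nonpos hα.le (by linarith))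
        (Real.sqrt_nonneg _)
    exact ⟨by linarith [min_le_right (L + α / √(OPvBound α β δ)) 0], by linarith⟩

theorem exists_OP_escape (hα : 0 < α) (hβ0 : 0 ≤ β) (hβ1 : β < 1)
    (hδ : α / √(1 - β) + 3 < δ) :
    ∃ k : ℕ, ∀ (W V : ℕ → ℝ) (X : ℕ → Bool),
      IsAdamRun α β (fun t => OPgrad δ (W t) (X t)) W V → ∀ t, 1 ≤ t →
      |W t + δ ^ 2| ≤ 1 → (∀ m < k, X (t + m) = false) → 2 ≤ W (t + k) + δ ^ 2 := by
  have hC : 0 ≤ α / √(1 - β) := by positivity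
  set σ := α / √(OPvBound α β δ)
  have hσ : 0 < σ := div_pos hα (Real.sqrt_pos.2 (OPvBound_pos hβ0 hβ1 (by linarith)))
  refine ⟨⌈3 / σ⌉₊, fun W V X hrun t ht hnear hX => ?_⟩
  set k := ⌈3 / σ⌉₊
  have hkσ : 3 ≤ k * σ := (div_le_iff₀ hσ).1 (Nat.le_ceil _)
  have hclimb : ∀ m ≤ k, min (-δ ^ 2 - 1 + m * σ) 0 ≤ W (t + m) ∧
      W (t + m) ≤ δ + α / √(1 - β) := by
    intro m
    induction m with
    | zero =>
      intro _
      obtain ⟨hlo, hhi⟩ := abs_le.1 hnear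
      simp only [Nat.cast_zero, zero_mul, add_zero]
      exact ⟨by linarith [min_le_left (-δ ^ 2 - 1) 0], by nlinarith⟩
    | succ m ih =>
      intro hm
      obtain ⟨hlo, hhi⟩ := ih (by omega)
      have hL : -δ ^ 2 - 1 ≤ min (-δ ^ 2 - 1 + m * σ) 0 :=
        le_min (by linarith [mul_nonneg m.cast_nonneg hσ.le]) (by nlinarith)
      obtain ⟨hlo', hhi'⟩ := OP_step_of_false hrun hα hβ0 hβ1 hδ (s := t + m) (by omega)
        (hX m (by omega)) hL hlo hhi
      refine ⟨le_trans ?_ hlo', hhi'⟩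
      rw [← min_add_add_right, zero_add]
      exact le_min (le_min ((min_le_left _ _).trans (by push_cast; linarith))
        ((min_le_right _ _).trans hσ.le)) (min_le_right _ _)
  have hfar : -δ ^ 2 + 2 ≤ min (-δ ^ 2 - 1 + k * σ) 0 := le_min (by linarith) (by nlinarith)
  linarith [(hclimb k le_rfl).1]

end OPRun

theorem Measurable.OPgrad {Ω : Type*} {m : MeasurableSpace Ω} {δ : ℝ} {f : Ω → ℝ}
    {b : Ω → Bool} (hf : Measurable f) (hb : Measurable b) :
    Measurable fun ω => OPgrad δ (f ω) (b ω) :=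
  Measurable.ite (hb (measurableSet_singleton true)) ((hf.div_const δ).add_const _)
    ((hf.div_const δ).sub_const 1)

theorem one_sub_integral_sq_le_measureReal_abs_le {Ω : Type*} [MeasurableSpace Ω]
    {μ : Measure Ω} [IsProbabilityMeasure μ] {Y : Ω → ℝ} (hY : Measurable Y)
    (hint : Integrable (fun ω => Y ω ^ 2) μ) :
    1 - ∫ ω, Y ω ^ 2 ∂μ ≤ μ.real {ω | |Y ω| ≤ 1} := by
  have hmarkov := mul_meas_ge_le_integral_of_nonneg (ae_of_all _ fun ω => sq_nonneg (Y ω)) hint 1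
  rw [one_mul] at hmarkov
  have hsub : {ω | |Y ω| ≤ 1}ᶜ ⊆ {ω | 1 ≤ Y ω ^ 2} := fun ω hω => by
    have hY1 : 1 < |Y ω| := not_le.1 hω
    show 1 ≤ Y ω ^ 2
    nlinarith [sq_abs (Y ω)]
  have hcompl := measureReal_mono hsub (μ := μ)
  rw [probReal_compl_eq_one_sub (measurableSet_le hY.abs measurable_const)] at hcompl
  linarith

theorem measure_preimage_false_eq {Ω : Type*} [MeasurableSpace Ω] {μ : Measure Ω}
    [IsProbabilityMeasure μ] {b : Ω → Bool} (hb : Measurable b) {p : ℝ} (hp : 0 ≤ p)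
    (htrue : μ {ω | b ω = true} = ENNReal.ofReal p) :
    μ (b ⁻¹' {false}) = ENNReal.ofReal (1 - p) := by
  have hcompl : b ⁻¹' {false} = {ω | b ω = true}ᶜ := by ext; simp
  rw [hcompl, prob_compl_eq_one_sub (s := {ω | b ω = true}) (hb (measurableSet_singleton true)),
    htrue, ENNReal.ofReal_sub _ hp, ENNReal.ofReal_one]

theorem ProbabilityTheory.iIndepFun.measure_inter_forall_mem_eq_mul_pow {Ω κ : Type*}
    [MeasurableSpace Ω] [mκ : MeasurableSpace κ] {μ : Measure Ω} {ξ : ℕ → Ω → κ}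
    (hind : iIndepFun ξ μ) (hξ : ∀ i, Measurable (ξ i)) {t k : ℕ} {A : Set Ω}
    (hA : MeasurableSet[⨆ i ∈ Set.Iio t, mκ.comap (ξ i)] A) {s : Set κ} (hs : MeasurableSet s)
    {p : ℝ≥0∞} (hp : ∀ i, μ (ξ i ⁻¹' s) = p) :
    μ (A ∩ {ω | ∀ m < k, ξ (t + m) ω ∈ s}) = μ A * p ^ k := by
  have hB : {ω | ∀ m < k, ξ (t + m) ω ∈ s} = ⋂ i ∈ Finset.Ico t (t + k), ξ i ⁻¹' s := by
    ext ω
    simp only [Set.mem_ofPred_eq, Set.mem_iInter, Set.mem_preimage, Finset.mem_Ico]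
    refine ⟨fun h i hi => ?_, fun h m hm => h (t + m) ⟨by omega, by omega⟩⟩
    obtain ⟨m, rfl⟩ := Nat.exists_eq_add_of_le hi.1
    exact h m (by omega)
  have hBm : MeasurableSet[⨆ i ∈ Set.Ici t, mκ.comap (ξ i)]
      (⋂ i ∈ Finset.Ico t (t + k), ξ i ⁻¹' s) :=
    Finset.measurableSet_biInter _ fun i hi =>
      le_iSup₂ (f := fun i (_ : i ∈ Set.Ici t) => mκ.comap (ξ i)) i (Finset.mem_Ico.1 hi).1 _
        ⟨s, hs, rfl⟩
  have hindep := indep_iSup_of_disjoint (fun i => (hξ i).comap_le)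
    ((iIndepFun_iff_iIndep _ _ _).1 hind) (Set.Iio_disjoint_Ici (le_refl t))
  rw [hB, (Indep_iff _ _ μ).1 hindep A _ hA hBm, hind.meas_biInter fun i _ => ⟨s, hs, rfl⟩,
    Finset.prod_congr rfl fun i _ => hp i, Finset.prod_const, Nat.card_Ico,
    Nat.add_sub_cancel_left]

section OPProcess

variable {Ω : Type*} {α β δ w₁ : ℝ} {ξ : ℕ → Ω → Bool} {w v : ℕ → Ω → ℝ}

theorem measurable_OP_iterates {m : MeasurableSpace Ω}
    (hrun : ∀ ω, IsAdamRun α β (fun t => OPgrad δ (w t ω) (ξ t ω)) (w · ω) (v · ω))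
    (hw1 : ∀ ω, w 1 ω = w₁) {n : ℕ} (hξ : ∀ s ≤ n, Measurable (ξ s)) :
    Measurable (v n) ∧ Measurable (w (n + 1)) := by
  induction n with
  | zero =>
    rw [show v 0 = fun _ => 0 from funext fun ω => (hrun ω).v_zero,
      show w 1 = fun _ => w₁ from funext hw1]
    exact ⟨measurable_const, measurable_const⟩
  | succ n ih =>
    obtain ⟨hv, hw⟩ := ih fun s hs => hξ s (by omega)
    have hg := hw.OPgrad (δ := δ) (hξ (n + 1) le_rfl)
    have hv' : Measurable (v (n + 1)) := by
      rw [funext fun ω => (hrun ω).v_succ n]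
      exact (hv.const_mul β).add ((hg.pow_const 2).const_mul _)
    refine ⟨hv', ?_⟩
    convert hw.sub ((hg.const_mul α).div hv'.sqrt) using 1
    exact funext fun ω => (hrun ω).w_succ (n + 1) (by omega)

theorem measurable_OP_iterate [MeasurableSpace Ω]
    (hrun : ∀ ω, IsAdamRun α β (fun t => OPgrad δ (w t ω) (ξ t ω)) (w · ω) (v · ω))
    (hw1 : ∀ ω, w 1 ω = w₁) (hξ : ∀ s, Measurable (ξ s)) {t : ℕ} (ht : 1 ≤ t) :
    Measurable (w t) := by
  obtain ⟨n, rfl⟩ : ∃ n, t = n + 1 := ⟨t - 1, by omega⟩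
  exact (measurable_OP_iterates hrun hw1 fun s _ => hξ s).2

theorem integrable_sq_OP_iterate [MeasurableSpace Ω] {μ : Measure Ω} [IsFiniteMeasure μ]
    (hrun : ∀ ω, IsAdamRun α β (fun t => OPgrad δ (w t ω) (ξ t ω)) (w · ω) (v · ω))
    (hα : 0 ≤ α) (hβ0 : 0 ≤ β) (hβ1 : β < 1) (hw1 : ∀ ω, w 1 ω = w₁)
    (hξ : ∀ s, Measurable (ξ s)) {t : ℕ} (ht : 1 ≤ t) (c : ℝ) :
    Integrable (fun ω => (w t ω + c) ^ 2) μ := by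
  have hm := measurable_OP_iterate hrun hw1 hξ ht
  obtain ⟨d, rfl⟩ : ∃ d, t = 1 + d := ⟨t - 1, by omega⟩
  refine Integrable.of_bound ((hm.add_const c).pow_const 2).aestronglyMeasurable
    ((|w₁| + α / √(1 - β) * d + |c|) ^ 2) (ae_of_all _ fun ω => ?_)
  have hdrift := (hrun ω).abs_sub_le_mul hα hβ0 hβ1 le_rfl d
  rw [hw1] at hdrift
  rw [Real.norm_eq_abs, abs_pow]
  refine pow_le_pow_left₀ (abs_nonneg _) ?_ 2
  linarith [abs_add_le (w (1 + d) ω) c, abs_sub_abs_le_abs_sub (w (1 + d) ω) w₁]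

theorem measureReal_mul_pow_le_integral_sq [MeasurableSpace Ω] {μ : Measure Ω}
    [IsProbabilityMeasure μ]
    (hrun : ∀ ω, IsAdamRun α β (fun t => OPgrad δ (w t ω) (ξ t ω)) (w · ω) (v · ω))
    (hα : 0 ≤ α) (hβ0 : 0 ≤ β) (hβ1 : β < 1) (hw1 : ∀ ω, w 1 ω = w₁)
    (hξ : ∀ s, Measurable (ξ s)) (hind : iIndepFun ξ μ) {q : ℝ} (hq : 0 ≤ q)
    (hfalse : ∀ i, μ (ξ i ⁻¹' {false}) = ENNReal.ofReal q) {t k : ℕ} (ht : 1 ≤ t)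
    (hesc : ∀ ω, |w t ω + δ ^ 2| ≤ 1 → (∀ m < k, ξ (t + m) ω = false) →
      2 ≤ w (t + k) ω + δ ^ 2) :
    4 * μ.real {ω | |w t ω + δ ^ 2| ≤ 1} * q ^ k ≤ ∫ ω, (w (t + k) ω + δ ^ 2) ^ 2 ∂μ := by
  have hwt : Measurable[⨆ i ∈ Set.Iio t, MeasurableSpace.comap (ξ i) inferInstance] (w t) := by
    obtain ⟨n, rfl⟩ : ∃ n, t = n + 1 := ⟨t - 1, by omega⟩
    refine (measurable_OP_iterates hrun hw1 fun s hs => Measurable.of_comap_le ?_).2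
    exact le_iSup₂ (f := fun i (_ : i ∈ Set.Iio (n + 1)) => MeasurableSpace.comap (ξ i) inferInstance)
      s (Set.mem_Iio.2 (by omega))
  have hAB := hind.measure_inter_forall_mem_eq_mul_pow hξ (k := k)
    (A := {ω | |w t ω + δ ^ 2| ≤ 1})
    (hwt (measurableSet_le (measurable_id.add_const _).abs measurable_const))
    (measurableSet_singleton false) hfalse
  have hint := integrable_sq_OP_iterate (μ := μ) hrun hα hβ0 hβ1 hw1 hξ (t := t + k) (by omega)
    (δ ^ 2)
  calc 4 * μ.real {ω | |w t ω + δ ^ 2| ≤ 1} * q ^ k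
      = 4 * μ.real ({ω | |w t ω + δ ^ 2| ≤ 1} ∩
          {ω | ∀ m < k, ξ (t + m) ω ∈ ({false} : Set Bool)}) := by
        rw [measureReal_def, measureReal_def, hAB, ENNReal.toReal_mul, ENNReal.toReal_pow,
          ENNReal.toReal_ofReal hq, mul_assoc]
    _ ≤ 4 * μ.real {ω | 4 ≤ (w (t + k) ω + δ ^ 2) ^ 2} := by
        refine mul_le_mul_of_nonneg_left (measureReal_mono fun ω ⟨hωA, hωB⟩ => ?_) (by norm_num)
        have := hesc ω hωA hωB
        show 4 ≤ (w (t + k) ω + δ ^ 2) ^ 2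
        nlinarith
    _ ≤ ∫ ω, (w (t + k) ω + δ ^ 2) ^ 2 ∂μ :=
        mul_meas_ge_le_integral_of_nonneg (ae_of_all _ fun ω => sq_nonneg _) hint 4

theorem tendsto_integral_sq_of_tendsto_integral_OPloss [MeasurableSpace Ω] {μ : Measure Ω}
    [IsProbabilityMeasure μ]
    (hrun : ∀ ω, IsAdamRun α β (fun t => OPgrad δ (w t ω) (ξ t ω)) (w · ω) (v · ω))
    (hα : 0 ≤ α) (hβ0 : 0 ≤ β) (hβ1 : β < 1) (hδ : 0 < δ) (hw1 : ∀ ω, w 1 ω = w₁)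
    (hξ : ∀ s, Measurable (ξ s))
    (hconv : Tendsto (fun t => ∫ ω, OPloss δ (w t ω) ∂μ) atTop (nhds (OPloss δ (-δ ^ 2)))) :
    Tendsto (fun t => ∫ ω, (w t ω + δ ^ 2) ^ 2 ∂μ) atTop (nhds 0) := by
  have hgap := (hconv.sub_const (OPloss δ (-δ ^ 2))).const_mul (2 * δ)
  rw [sub_self, mul_zero] at hgap
  refine hgap.congr' (eventually_atTop.2 ⟨1, fun t ht => ?_⟩)
  simp only [OPloss_eq hδ.ne' (w t _)]
  rw [integral_add ((integrable_sq_OP_iterate hrun hα hβ0 hβ1 hw1 hξ ht _).div_const _)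
    (integrable_const _), integral_const, integral_div]
  simp only [probReal_univ, one_smul, add_sub_cancel_right]
  field_simp

end OPProcess

/-- Divergence of ADAM on OP(δ): for any step size `α > 0` and `β₂ ∈ [0,1)` there is a
threshold `δ* > 2` such that for every `δ > δ*` and every initial point `w₁`, the ADAM
iterates on OP(δ) (with i.i.d. samples `ξ_t`, `P(ξ_t = 1) = (1+δ)/(1+δ⁴)`,
`v_t = β₂ v_{t-1} + (1-β₂) g_t²`, `w_{t+1} = w_t - α g_t/√v_t`) fail to converge in
expectation to the optimal value `F* = F(-δ²)`. -/
theorem adam_diverges_on_OP (α β₂ : ℝ) (hα : 0 < α) (hβ₂0 : 0 ≤ β₂) (hβ₂1 : β₂ < 1) :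
    ∃ δstar : ℝ, 2 < δstar ∧
      ∀ δ : ℝ, δstar < δ →
      ∀ (Ω : Type) (_mΩ : MeasurableSpace Ω) (μ : Measure Ω), IsProbabilityMeasure μ →
      ∀ ξ : ℕ → Ω → Bool,
        (∀ t, Measurable (ξ t)) →
        ProbabilityTheory.iIndepFun ξ μ →
        (∀ t, μ {ω | ξ t ω = true} = ENNReal.ofReal ((1 + δ) / (1 + δ ^ 4))) →
      ∀ (w v : ℕ → Ω → ℝ) (w₁ : ℝ),
        (∀ ω, w 1 ω = w₁) →
        (∀ ω, v 0 ω = 0) →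
        (∀ t : ℕ, 1 ≤ t → ∀ ω,
          v t ω = β₂ * v (t - 1) ω + (1 - β₂) * (OPgrad δ (w t ω) (ξ t ω)) ^ 2) →
        (∀ t : ℕ, 1 ≤ t → ∀ ω,
          w (t + 1) ω = w t ω - α * OPgrad δ (w t ω) (ξ t ω) / Real.sqrt (v t ω)) →
        ¬ Tendsto (fun t => ∫ ω, OPloss δ (w t ω) ∂μ) atTop (nhds (OPloss δ (-δ ^ 2))) := by
  have hC : 0 ≤ α / √(1 - β₂) := by positivity
  refine ⟨α / √(1 - β₂) + 3, by linarith, fun δ hδ Ω _ μ _ ξ hξ hind hξtrue w v w₁ hw1 hv0 hvrec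
    hwrec hconv => ?_⟩
  have hrun (ω : Ω) : IsAdamRun α β₂ (fun t => OPgrad δ (w t ω) (ξ t ω)) (w · ω) (v · ω) :=
    ⟨hv0 ω, fun t => by simpa using hvrec (t + 1) (by omega) ω, fun t ht => hwrec t ht ω⟩
  obtain ⟨k, hk⟩ := exists_OP_escape hα hβ₂0 hβ₂1 hδ
  set q := 1 - (1 + δ) / (1 + δ ^ 4)
  have hq : 0 < q := sub_pos.2 (OP_prob_lt_one (by linarith))
  have hfalse (i : ℕ) :=
    measure_preimage_false_eq (hξ i) (div_nonneg (by linarith) (by positivity)) (hξtrue i)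
  set f := fun t => ∫ ω, (w t ω + δ ^ 2) ^ 2 ∂μ
  have hf : Tendsto f atTop (nhds 0) := tendsto_integral_sq_of_tendsto_integral_OPloss hrun hα.le
    hβ₂0 hβ₂1 (by linarith) hw1 hξ hconv
  have hlow : ∀ t ≥ 1, 4 * (1 - f t) * q ^ k ≤ f (t + k) := fun t ht =>
    calc 4 * (1 - f t) * q ^ k ≤ 4 * μ.real {ω | |w t ω + δ ^ 2| ≤ 1} * q ^ k := by
          gcongr
          exact one_sub_integral_sq_le_measureReal_abs_le
            ((measurable_OP_iterate hrun hw1 hξ ht).add_const _)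
            (integrable_sq_OP_iterate hrun hα.le hβ₂0 hβ₂1 hw1 hξ ht _)
      _ ≤ f (t + k) := measureReal_mul_pow_le_integral_sq hrun hα.le hβ₂0 hβ₂1 hw1 hξ hind hq.le
          hfalse ht fun ω => hk _ _ _ (hrun ω) t ht
  have hlim := le_of_tendsto_of_tendsto ((hf.const_sub 1).const_mul 4 |>.mul_const (q ^ k))
    (hf.comp (tendsto_add_atTop_nat k)) (eventually_atTop.2 ⟨1, hlow⟩)
  have : 0 < q ^ k := pow_pos hq k
  linarith
end

section
/- Under Assumption (resetting comparison) below, the objective value after the Option B (no-resetting) update is at least that after the Option A (resetting) update: F(ŵ) ≥ F(w_A). -/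
/-!
Write `g = F'(w)`, `a = |w_A - w|` and `b = |ŵ - w|`. The resetting step moves against `g`, so
`L`-smoothness gives `F(w_A) ≤ F(w) - |g| a + L a² / 2`, while strong convexity gives
`F(ŵ) ≥ F(w) - |g| b + c b² / 2` whatever the direction of `ŵ`. Assumption (b) says that the
resetting step overshoots, `2 |g| ≤ L a`. Since `|m̂| ≥ (2β₁ - 1) |g|` by (a) and the bias-corrected
second moment satisfies `ṽ ≤ G²`, assumption (c) gives `L a ≤ c b`. Together with `c < L`
these two bounds give `L a² / 2 - |g| a ≤ c b² / 2 - |g| b`.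
-/

open Finset

theorem ConvexOn.add_deriv_mul_sub_le {S : Set ℝ} {f : ℝ → ℝ} {x y : ℝ}
    (hf : ConvexOn ℝ S f) (hx : x ∈ S) (hy : y ∈ S) (hfd : DifferentiableAt ℝ f x) :
    f x + deriv f x * (y - x) ≤ f y := by
  rcases lt_trichotomy x y with hxy | rfl | hyx
  · have h := hf.deriv_le_slope hx hy hxy hfd
    rw [slope_def_field, le_div_iff₀ (sub_pos.2 hxy)] at h
    linarith
  · simp
  · have h := hf.slope_le_deriv hy hx hyx hfd
    rw [slope_def_field, div_le_iff₀ (sub_pos.2 hyx)] at h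
    linarith

theorem StrongConvexOn.add_deriv_mul_sub_add_le {S : Set ℝ} {f : ℝ → ℝ} {c x y : ℝ}
    (hf : StrongConvexOn S c f) (hx : x ∈ S) (hy : y ∈ S) (hfd : DifferentiableAt ℝ f x) :
    f x + deriv f x * (y - x) + c / 2 * (y - x) ^ 2 ≤ f y := by
  have hconv := strongConvexOn_iff_convex.1 hf
  simp only [Real.norm_eq_abs, sq_abs] at hconv
  have hd : HasDerivAt (fun z => f z - c / 2 * z ^ 2) (deriv f x - c * x) x := by
    refine (hfd.hasDerivAt.sub ((hasDerivAt_pow 2 x).const_mul (c / 2))).congr_deriv ?_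
    ring
  have h := hconv.add_deriv_mul_sub_le hx hy hd.differentiableAt
  rw [hd.deriv] at h
  linarith

theorem le_add_deriv_mul_sub_add_of_lipschitzWith_deriv {f : ℝ → ℝ} {K : NNReal}
    (hf : Differentiable ℝ f) (hf' : LipschitzWith K (deriv f)) (x y : ℝ) :
    f y ≤ f x + deriv f x * (y - x) + K / 2 * (y - x) ^ 2 := by
  have hd : ∀ z, HasDerivAt (fun z => K / 2 * z ^ 2 - f z) (K * z - deriv f z) z := fun z => by
    refine (((hasDerivAt_pow 2 z).const_mul ((K : ℝ) / 2)).sub (hf z).hasDerivAt).congr_deriv ?_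
    ring
  have hmono : Monotone (deriv fun z => K / 2 * z ^ 2 - f z) := fun a b hab => by
    have h := (le_abs_self _).trans (hf'.dist_le_mul b a)
    rw [Real.dist_eq, abs_of_nonneg (sub_nonneg.2 hab)] at h
    rw [(hd a).deriv, (hd b).deriv]
    linarith
  have h := (hmono.convexOn_univ_of_deriv fun z => (hd z).differentiableAt).add_deriv_mul_sub_le
    (Set.mem_univ x) (Set.mem_univ y) (hd x).differentiableAt
  rw [(hd x).deriv] at h
  linarith

theorem half_mul_sq_sub_mul_le {c L γ a b : ℝ} (hc : 0 < c) (hcL : c < L) (ha : 0 ≤ a)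
    (hγ : 2 * γ ≤ L * a) (hab : L * a ≤ c * b) :
    L / 2 * a ^ 2 - γ * a ≤ c / 2 * b ^ 2 - γ * b := by
  have hab' : a ≤ b := le_of_mul_le_mul_left ((mul_le_mul_of_nonneg_right hcL.le ha).trans hab) hc
  calc L / 2 * a ^ 2 - γ * a = a * (L * a / 2 - γ) := by ring
    _ ≤ b * (L * a / 2 - γ) := mul_le_mul_of_nonneg_right hab' (by linarith)
    _ ≤ b * (c * b / 2 - γ) := mul_le_mul_of_nonneg_left (by linarith) (ha.trans hab')
    _ = c / 2 * b ^ 2 - γ * b := by ring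

theorem apply_le_apply_of_step_comparison {f : ℝ → ℝ} {c L g w x y : ℝ} (hc : 0 < c)
    (hcL : c < L) (hup : f x ≤ f w + g * (x - w) + L / 2 * (x - w) ^ 2)
    (hlo : f w + g * (y - w) + c / 2 * (y - w) ^ 2 ≤ f y) (hdesc : g * (x - w) ≤ 0)
    (hx : 2 * |g| ≤ L * |x - w|) (hxy : L * |x - w| ≤ c * |y - w|) : f x ≤ f y := by
  have hgx : g * (x - w) = -(|g| * |x - w|) := by rw [← abs_mul, abs_of_nonpos hdesc, neg_neg]
  have hgy : -(|g| * |y - w|) ≤ g * (y - w) := by rw [← abs_mul]; exact neg_abs_le _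
  have h := half_mul_sq_sub_mul_le hc hcL (abs_nonneg _) hx hxy
  rw [sq_abs, sq_abs] at h
  linarith

theorem one_sub_mul_sum_Icc_pow (β : ℝ) (m : ℕ) :
    (1 - β) * ∑ j ∈ Icc 1 m, β ^ (m - j) = 1 - β ^ m := by
  rw [sum_nbij' (fun j => m - j) (fun k => m - k) (t := range m) (g := (β ^ ·))]
  · rw [mul_comm, ← neg_sub, mul_neg, geom_sum_mul, neg_sub]
  all_goals intro j hj; simp_all; try omega

theorem one_sub_mul_sum_Icc_pow_mul_le {β B : ℝ} {m : ℕ} {a : ℕ → ℝ} (hβ0 : 0 ≤ β)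
    (hβ1 : β ≤ 1) (ha : ∀ j ∈ Icc 1 m, a j ≤ B) :
    (1 - β) * ∑ j ∈ Icc 1 m, β ^ (m - j) * a j ≤ (1 - β ^ m) * B := by
  calc (1 - β) * ∑ j ∈ Icc 1 m, β ^ (m - j) * a j
      ≤ (1 - β) * ∑ j ∈ Icc 1 m, β ^ (m - j) * B := by
        gcongr with j hj
        exact ha j hj
    _ = (1 - β ^ m) * B := by rw [← sum_mul, ← mul_assoc, one_sub_mul_sum_Icc_pow]

theorem ema_step_div_one_sub_pow_le {β V x B : ℝ} {m : ℕ} (hβ0 : 0 ≤ β) (hβ1 : β < 1)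
    (hV : V ≤ (1 - β ^ m) * B) (hx : x ≤ B) :
    (β * V + (1 - β) * x) / (1 - β ^ (m + 1)) ≤ B := by
  rw [div_le_iff₀ (sub_pos.2 (pow_lt_one₀ hβ0 hβ1 m.succ_ne_zero)), pow_succ]
  nlinarith [mul_le_mul_of_nonneg_left hV hβ0, mul_le_mul_of_nonneg_left hx (sub_nonneg.2 hβ1.le)]

theorem two_mul_sub_one_mul_abs_le_abs_add {β M g : ℝ} (hβ0 : 0 ≤ β) (hβ1 : β ≤ 1)
    (hgM : |g| ≤ |M|) : (2 * β - 1) * |g| ≤ |β * M + (1 - β) * g| :=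
  calc (2 * β - 1) * |g| ≤ β * |M| - (1 - β) * |g| := by
        nlinarith [mul_le_mul_of_nonneg_left hgM hβ0]
    _ = |β * M| - |(1 - β) * g| := by
        rw [abs_mul, abs_mul, abs_of_nonneg hβ0, abs_of_nonneg (sub_nonneg.2 hβ1)]
    _ ≤ |β * M + (1 - β) * g| := abs_sub_abs_le_abs_add _ _

theorem two_mul_abs_le_mul_abs_div_sqrt {L α g G ε : ℝ} (hα : 0 ≤ α) (hε : 0 < ε)
    (hg : |g| ≤ G) (hαL : 2 * √(G ^ 2 + ε) ≤ L * α) :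
    2 * |g| ≤ L * |α * g / √(g ^ 2 + ε)| := by
  have hs : 0 < √(g ^ 2 + ε) := by positivity
  have hsG : √(g ^ 2 + ε) ≤ √(G ^ 2 + ε) :=
    Real.sqrt_le_sqrt (add_le_add_left (sq_le_sq' (abs_le.1 hg).1 (abs_le.1 hg).2) ε)
  rw [abs_div, abs_mul, abs_of_nonneg hα, abs_of_pos hs, ← mul_div_assoc, le_div_iff₀ hs]
  calc 2 * |g| * √(g ^ 2 + ε) ≤ |g| * (2 * √(G ^ 2 + ε)) := by nlinarith [abs_nonneg g]
    _ ≤ L * (α * |g|) := by nlinarith [mul_le_mul_of_nonneg_left hαL (abs_nonneg g)]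

theorem mul_abs_div_sqrt_le_mul_abs_div_sqrt {c L α β D g m v ε G : ℝ} (hc : 0 < c)
    (hD : 0 < D) (hε : 0 < ε) (hv0 : 0 ≤ v) (hvG : v ≤ G ^ 2)
    (hm : (2 * β - 1) * |g| ≤ |m|) (hC : L / c ≤ (2 * β - 1) / D * √(ε / (G ^ 2 + ε))) :
    L * |α * g / √(g ^ 2 + ε)| ≤ c * |α * (m / D) / √(v + ε)| := by
  have hsv : 0 < √(v + ε) := by positivity
  have hsg : 0 < √(g ^ 2 + ε) := by positivity
  have hsG : 0 < √(G ^ 2 + ε) := by positivity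
  have hroots : √ε / (√(g ^ 2 + ε) * √(G ^ 2 + ε)) ≤ 1 / √(v + ε) := by
    rw [div_le_div_iff₀ (by positivity) hsv, one_mul]
    exact mul_le_mul (Real.sqrt_le_sqrt (le_add_of_nonneg_left (sq_nonneg g))) (Real.sqrt_le_sqrt (by linarith))
      hsv.le hsg.le
  rw [div_le_iff₀ hc, Real.sqrt_div hε.le] at hC
  calc L * |α * g / √(g ^ 2 + ε)|
      ≤ (2 * β - 1) / D * (√ε / √(G ^ 2 + ε)) * c * |α * g / √(g ^ 2 + ε)| := by gcongr
    _ = c * |α| / D * ((2 * β - 1) * |g|) * (√ε / (√(g ^ 2 + ε) * √(G ^ 2 + ε))) := by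
        rw [abs_div, abs_mul, abs_of_pos hsg]
        field_simp
    _ ≤ c * |α| / D * |m| * (1 / √(v + ε)) := by gcongr
    _ = c * |α * (m / D) / √(v + ε)| := by
        rw [abs_div, abs_mul, abs_div, abs_of_pos hD, abs_of_pos hsv]
        ring

theorem resetting_update_better_general (F : ℝ → ℝ) (c L : ℝ)
    (hc : 0 < c) (hcL : c < L)
    (hFdiff : Differentiable ℝ F)
    (hFsc : StrongConvexOn Set.univ c F)
    (hFlip : LipschitzWith (Real.toNNReal L) (deriv F))
    (β₁ β₂ ε α₂ G : ℝ) (m : ℕ)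
    (hβ₁0 : 0 ≤ β₁) (hβ₁1 : β₁ < 1) (hβ₂0 : 0 ≤ β₂) (hβ₂1 : β₂ < 1)
    (hε : 0 < ε) (hα₂ : 0 < α₂)
    (w : ℝ) (g : ℕ → ℝ)
    (hgbd : ∀ j ∈ Finset.Icc 1 m, |g j| ≤ G)
    (hgw : |deriv F w| ≤ G)
    (M V : ℝ)
    (hV : V = (1 - β₂) * ∑ j ∈ Finset.Icc 1 m, β₂ ^ (m - j) * (g j) ^ 2)
    (wA wB : ℝ)
    -- Option A (resetting) update
    (hwA : wA = w - α₂ * (deriv F w) / Real.sqrt ((deriv F w) ^ 2 + ε))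
    -- Option B (no resetting) update
    (hwB : wB = w - α₂ * ((β₁ * M + (1 - β₁) * deriv F w) / (1 - β₁ ^ (m + 1))) /
        Real.sqrt ((β₂ * V + (1 - β₂) * (deriv F w) ^ 2) / (1 - β₂ ^ (m + 1)) + ε))
    -- Assumption (a): progress in the first loop
    (hA : |deriv F w| ≤ |M|)
    -- Assumption (b)
    (hB : 2 * Real.sqrt (G ^ 2 + ε) ≤ L * α₂)
    -- Assumption (c)
    (hC : L / c ≤ ((2 * β₁ - 1) / (1 - β₁ ^ (m + 1))) * Real.sqrt (ε / (G ^ 2 + ε))) :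
    F wA ≤ F wB := by
  have hsq_le {x : ℝ} (hx : |x| ≤ G) : x ^ 2 ≤ G ^ 2 := sq_le_sq' (abs_le.1 hx).1 (abs_le.1 hx).2
  have hV0 : 0 ≤ V := hV ▸ mul_nonneg (sub_nonneg.2 hβ₂1.le) (by positivity)
  have hVG : V ≤ (1 - β₂ ^ m) * G ^ 2 :=
    hV ▸ one_sub_mul_sum_Icc_pow_mul_le hβ₂0 hβ₂1.le fun j hj => hsq_le (hgbd j hj)
  have hv0 : 0 ≤ (β₂ * V + (1 - β₂) * deriv F w ^ 2) / (1 - β₂ ^ (m + 1)) :=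
    div_nonneg (by nlinarith [sq_nonneg (deriv F w)])
      (sub_nonneg.2 (pow_le_one₀ hβ₂0 hβ₂1.le))
  have hup := le_add_deriv_mul_sub_add_of_lipschitzWith_deriv hFdiff hFlip w wA
  rw [Real.coe_toNNReal L (hc.trans hcL).le] at hup
  refine apply_le_apply_of_step_comparison hc hcL hup
    (hFsc.add_deriv_mul_sub_add_le trivial trivial (hFdiff w)) ?_ ?_ ?_
  · rw [hwA, sub_sub_cancel_left, mul_neg, neg_nonpos, mul_div_assoc', mul_left_comm, ← sq]
    positivity
  · rw [hwA, sub_sub_cancel_left, abs_neg]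
    exact two_mul_abs_le_mul_abs_div_sqrt hα₂.le hε hgw hB
  · rw [hwA, hwB, sub_sub_cancel_left, sub_sub_cancel_left, abs_neg, abs_neg]
    exact mul_abs_div_sqrt_le_mul_abs_div_sqrt hc
      (sub_pos.2 (pow_lt_one₀ hβ₁0 hβ₁1 m.succ_ne_zero)) hε hv0 (ema_step_div_one_sub_pow_le hβ₂0 hβ₂1 hVG (hsq_le hgw))
      (two_mul_sub_one_mul_abs_le_abs_add hβ₁0 hβ₁1.le hA) hC

/-- Resetting comparison: for a `c`-strongly convex `F` with `L`-Lipschitz derivative,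
under the assumptions (a) `|M| ≥ |F'(w)|`, (b) `Lα₂ ≥ 2√(G²+ε)`, and
(c) `L/c ≤ ((2β₁-1)/(1-β₁^{m+1}))√(ε/(G²+ε))`, the objective value after the
no-resetting ADAM update (Option B) is at least that after the resetting update
(Option A): `F(ŵ) ≥ F(w_A)`. -/
theorem resetting_update_better (F : ℝ → ℝ) (c L : ℝ)
    (hc : 0 < c) (hcL : c < L)
    (hFdiff : Differentiable ℝ F)
    (hFsc : StrongConvexOn Set.univ c F)
    (hFlip : LipschitzWith (Real.toNNReal L) (deriv F))
    (β₁ β₂ ε α₂ G : ℝ) (m : ℕ)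
    (hβ₁0 : 0 ≤ β₁) (hβ₁1 : β₁ < 1) (hβ₂0 : 0 ≤ β₂) (hβ₂1 : β₂ < 1)
    (hε : 0 < ε) (hα₂ : 0 < α₂) (hG : 0 < G)
    (w : ℝ) (g : ℕ → ℝ)
    (hgbd : ∀ j ∈ Finset.Icc 1 m, |g j| ≤ G)
    (hgw : |deriv F w| ≤ G)
    (M V : ℝ)
    (hM : M = (1 - β₁) * ∑ j ∈ Finset.Icc 1 m, β₁ ^ (m - j) * g j)
    (hV : V = (1 - β₂) * ∑ j ∈ Finset.Icc 1 m, β₂ ^ (m - j) * (g j) ^ 2)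
    (wA wB : ℝ)
    -- Option A (resetting) update
    (hwA : wA = w - α₂ * (deriv F w) / Real.sqrt ((deriv F w) ^ 2 + ε))
    -- Option B (no resetting) update
    (hwB : wB = w - α₂ * ((β₁ * M + (1 - β₁) * deriv F w) / (1 - β₁ ^ (m + 1))) /
        Real.sqrt ((β₂ * V + (1 - β₂) * (deriv F w) ^ 2) / (1 - β₂ ^ (m + 1)) + ε))
    -- Assumption (a): progress in the first loop
    (hA : |deriv F w| ≤ |M|)
    -- Assumption (b)
    (hB : 2 * Real.sqrt (G ^ 2 + ε) ≤ L * α₂)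
    -- Assumption (c)
    (hC : L / c ≤ ((2 * β₁ - 1) / (1 - β₁ ^ (m + 1))) * Real.sqrt (ε / (G ^ 2 + ε))) :
    F wA ≤ F wB :=
  resetting_update_better_general F c L hc hcL hFdiff hFsc hFlip β₁ β₂ ε α₂ G m hβ₁0 hβ₁1 hβ₂0 hβ₂1
    hε hα₂ w g hgbd hgw M V hV wA wB hwA hwB hA hB hC
end

section
/- In the VRADAM (Option A) setting, assume F is bounded below by F_inf > −∞ and the step sizes satisfy ∑_{t=1}^∞ α_t = +∞ and ∑_{t=1}^∞ α_t² < +∞. Then for every initial point w̃₁ and every choice of mini-batches, liminf_{t→∞} ‖∇F(w̃_t)‖₂ = 0. -/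
/-!
Within an epoch every Adam step has length at most `α_t C / √ε`, where `C = 3G` bounds the
variance-reduced gradients `g_k` and `√(ṽ + ε) ≥ √ε`. The epoch therefore stays within `O(α_t)` of
`w̃_t`, so by Lipschitz continuity every `g_k`, and with them the bias-corrected momentum (an
average of the `g_k`), is within `O(α_t)` of `h = ∇F(w̃_t)`. The preconditioner `1 / √(ṽ + ε)` has
its entries in `[1 / √(C² + ε), 1 / √ε]`, so by the descent lemma each inner step lowers `F` by
at least `α_t ‖h‖² / √(C² + ε) - O(α_t²)`. Telescoping over epochs against `F ≥ F_inf` gives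
`∑ α_t ‖∇F(w̃_t)‖² < ∞`, which together with `∑ α_t = ∞` forces `liminf ‖∇F(w̃_t)‖ = 0`.
-/

open MeasureTheory Filter

/-- The full-batch objective `F = (1/N) ∑_n f_n`. -/
noncomputable def fullLoss (d N : ℕ) (f : Fin N → EuclideanSpace ℝ (Fin d) → ℝ) :
    EuclideanSpace ℝ (Fin d) → ℝ :=
  fun x => (1 / (N : ℝ)) * ∑ n, f n x

/-- The mini-batch objective `F^B = (1/b) ∑_{n ∈ B} f_n`. -/
noncomputable def batchLoss (d N : ℕ) (b : ℕ) (f : Fin N → EuclideanSpace ℝ (Fin d) → ℝ)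
    (B : Finset (Fin N)) : EuclideanSpace ℝ (Fin d) → ℝ :=
  fun x => (1 / (b : ℝ)) * ∑ n ∈ B, f n x

open Finset InnerProductSpace
open scoped NNReal

section Smooth

variable {E : Type*} [NormedAddCommGroup E] [InnerProductSpace ℝ E] [CompleteSpace E]

theorem hasDerivAt_comp_add_smul {F : E → ℝ} (hF : Differentiable ℝ F) (x v : E) (s : ℝ) :
    HasDerivAt (fun s : ℝ => F (x + s • v)) ⟪gradient F (x + s • v), v⟫_ℝ s := by
  have hline : HasDerivAt (fun s : ℝ => x + s • v) v s := by
    simpa using ((hasDerivAt_id s).smul_const v).const_add x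
  rw [inner_gradient_left]
  exact (hF _).hasFDerivAt.comp_hasDerivAt s hline

theorem le_add_inner_gradient_add_of_lipschitzWith {F : E → ℝ} {K : ℝ≥0}
    (hF : Differentiable ℝ F) (hlip : LipschitzWith K (gradient F)) (x y : E) :
    F y ≤ F x + ⟪gradient F x, y - x⟫_ℝ + K / 2 * ‖y - x‖ ^ 2 := by
  set v := y - x
  set ψ : ℝ → ℝ := fun s => F (x + s • v) - s * ⟪gradient F x, v⟫_ℝ - K / 2 * ‖v‖ ^ 2 * s ^ 2
  have hψ : ∀ s,
      HasDerivAt ψ (⟪gradient F (x + s • v) - gradient F x, v⟫_ℝ - K * ‖v‖ ^ 2 * s) s := by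
    intro s
    refine (((hasDerivAt_comp_add_smul hF x v s).sub ((hasDerivAt_id s).mul_const _)).sub
      ((hasDerivAt_pow 2 s).const_mul (K / 2 * ‖v‖ ^ 2))).congr_deriv ?_
    rw [inner_sub_left]
    ring
  have hψ' : ∀ s ∈ interior (Set.Icc (0 : ℝ) 1), deriv ψ s ≤ 0 := by
    intro s hs
    rw [interior_Icc] at hs
    rw [(hψ s).deriv, sub_nonpos]
    calc ⟪gradient F (x + s • v) - gradient F x, v⟫_ℝ
        ≤ ‖gradient F (x + s • v) - gradient F x‖ * ‖v‖ := real_inner_le_norm _ _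
      _ ≤ K * ‖x + s • v - x‖ * ‖v‖ := by gcongr; exact hlip.norm_sub_le _ _
      _ = K * ‖v‖ ^ 2 * s := by
        rw [add_sub_cancel_left, norm_smul, Real.norm_of_nonneg hs.1.le]; ring
  have hanti := antitoneOn_of_deriv_nonpos (convex_Icc 0 1)
    (fun s _ => (hψ s).continuousAt.continuousWithinAt)
    (fun s _ => (hψ s).differentiableAt.differentiableWithinAt) hψ'
    (Set.left_mem_Icc.2 zero_le_one) (Set.right_mem_Icc.2 zero_le_one) zero_le_one
  have hψ0 : ψ 0 = F x := by simp [ψ]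
  have hψ1 : ψ 1 = F y - ⟪gradient F x, y - x⟫_ℝ - K / 2 * ‖y - x‖ ^ 2 := by simp [ψ, v]
  linarith

theorem apply_sub_smul_le_of_inner_gradient_ge {F : E → ℝ} {K : ℝ≥0} (hF : Differentiable ℝ F)
    (hlip : LipschitzWith K (gradient F)) {x y q : E} {α a Q r : ℝ} (hα : 0 ≤ α)
    (hq : ‖q‖ ≤ Q) (hxy : ‖x - y‖ ≤ r) (ha : a ≤ ⟪gradient F y, q⟫_ℝ) :
    F (x - α • q) ≤ F x - α * (a - K * r * Q) + K / 2 * α ^ 2 * Q ^ 2 := by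
  have hdesc := le_add_inner_gradient_add_of_lipschitzWith hF hlip x (x - α • q)
  rw [sub_sub_cancel_left, inner_neg_right, real_inner_smul_right, norm_neg, norm_smul,
    Real.norm_of_nonneg hα] at hdesc
  have hQ : 0 ≤ Q := (norm_nonneg _).trans hq
  have hr : 0 ≤ r := (norm_nonneg _).trans hxy
  have hcross : |⟪gradient F x - gradient F y, q⟫_ℝ| ≤ K * r * Q :=
    (abs_real_inner_le_norm _ _).trans <| mul_le_mul
      ((hlip.norm_sub_le x y).trans (by gcongr)) hq (norm_nonneg _) (by positivity)
  have hinner : a - K * r * Q ≤ ⟪gradient F x, q⟫_ℝ := by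
    rw [← sub_add_cancel (gradient F x) (gradient F y), inner_add_left]
    linarith [neg_abs_le ⟪gradient F x - gradient F y, q⟫_ℝ]
  have hsq : K / 2 * (α * ‖q‖) ^ 2 ≤ K / 2 * α ^ 2 * Q ^ 2 := by
    rw [mul_pow, ← mul_assoc]; gcongr
  linarith [mul_le_mul_of_nonneg_left hinner hα]

end Smooth

theorem norm_inv_card_smul_sum_le {E ι : Type*} [SeminormedAddCommGroup E] [NormedSpace ℝ E]
    (S : Finset ι) {u : ι → E} {c : ℝ} (hc : 0 ≤ c) (hu : ∀ n ∈ S, ‖u n‖ ≤ c) :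
    ‖(1 / (#S : ℝ)) • ∑ n ∈ S, u n‖ ≤ c := by
  rw [norm_smul, Real.norm_of_nonneg (by positivity)]
  calc 1 / (#S : ℝ) * ‖∑ n ∈ S, u n‖ ≤ 1 / #S * (#S * c) := by
        gcongr; simpa using norm_sum_le_of_le S hu
    _ ≤ c := by
        rcases (#S).eq_zero_or_pos with hS | hS
        · simp [hS, hc]
        · rw [one_div, inv_mul_cancel_left₀ (by positivity)]

theorem norm_sub_add_le_three_mul {E : Type*} [SeminormedAddCommGroup E] {u : E → E} {h : E}
    {G : ℝ} (hu : ∀ x, ‖u x‖ ≤ G) (hh : ‖h‖ ≤ G) (x y : E) : ‖u x - u y + h‖ ≤ 3 * G := by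
  linarith [norm_add_le (u x - u y) h, norm_sub_le (u x) (u y), hu x, hu y]

section Average

variable {E ι : Type*} [NormedAddCommGroup E] [InnerProductSpace ℝ E] [CompleteSpace E]
  {f : ι → E → ℝ}

theorem gradient_const_mul_sum (S : Finset ι) (c : ℝ) (hf : ∀ n, Differentiable ℝ (f n)) (x : E) :
    gradient (fun x => c * ∑ n ∈ S, f n x) x = c • ∑ n ∈ S, gradient (f n) x := by
  have hfderiv : fderiv ℝ (fun x => c * ∑ n ∈ S, f n x) x = c • ∑ n ∈ S, fderiv ℝ (f n) x := by
    rw [fderiv_const_mul ((Differentiable.fun_sum fun n _ => hf n).differentiableAt) c,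
      fderiv_fun_sum fun n _ => (hf n).differentiableAt]
  rw [gradient, hfderiv, map_smul, map_sum]
  rfl

theorem norm_gradient_avg_le (S : Finset ι) (hf : ∀ n, Differentiable ℝ (f n)) {G : ℝ}
    (hG : 0 ≤ G) (hbdd : ∀ n x, ‖gradient (f n) x‖ ≤ G) (x : E) :
    ‖gradient (fun x => 1 / (#S : ℝ) * ∑ n ∈ S, f n x) x‖ ≤ G := by
  rw [gradient_const_mul_sum S _ hf]
  exact norm_inv_card_smul_sum_le S hG fun n _ => hbdd n x

theorem lipschitzWith_gradient_avg (S : Finset ι) (hf : ∀ n, Differentiable ℝ (f n)) {K : ℝ≥0}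
    (hlip : ∀ n, LipschitzWith K (gradient (f n))) :
    LipschitzWith K (gradient fun x => 1 / (#S : ℝ) * ∑ n ∈ S, f n x) := by
  refine LipschitzWith.of_dist_le_mul fun x y => ?_
  simp only [dist_eq_norm, gradient_const_mul_sum S _ hf, ← smul_sub, ← sum_sub_distrib]
  exact norm_inv_card_smul_sum_le S (by positivity) fun n _ => (hlip n).norm_sub_le x y

end Average

theorem fullLoss_eq_avg (d N : ℕ) (f : Fin N → EuclideanSpace ℝ (Fin d) → ℝ) :
    fullLoss d N f = fun x => 1 / (#(univ : Finset (Fin N)) : ℝ) * ∑ n, f n x := by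
  rw [card_univ, Fintype.card_fin]
  rfl

theorem batchLoss_eq_avg {d N b : ℕ} (f : Fin N → EuclideanSpace ℝ (Fin d) → ℝ)
    {B : Finset (Fin N)} (hB : #B = b) :
    batchLoss d N b f B = fun x => 1 / (#B : ℝ) * ∑ n ∈ B, f n x := by
  rw [hB]
  rfl

theorem norm_ema_sub_le {E : Type*} [SeminormedAddCommGroup E] [NormedSpace ℝ E] {β c : ℝ}
    (hβ0 : 0 ≤ β) (hβ1 : β ≤ 1) {n : ℕ} {x g : ℕ → E} (h : E) (hx0 : x 0 = 0)
    (hrec : ∀ k ∈ Icc 1 n, x k = β • x (k - 1) + (1 - β) • g k)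
    (hg : ∀ k ∈ Icc 1 n, ‖g k - h‖ ≤ c) :
    ∀ k ≤ n, ‖x k - (1 - β ^ k) • h‖ ≤ (1 - β ^ k) * c := by
  intro k hk
  induction k with
  | zero => simp [hx0]
  | succ k ih =>
    have hk' : k + 1 ∈ Icc 1 n := mem_Icc.2 ⟨by omega, hk⟩
    have hsplit : x (k + 1) - (1 - β ^ (k + 1)) • h
        = β • (x k - (1 - β ^ k) • h) + (1 - β) • (g (k + 1) - h) := by
      rw [hrec _ hk', Nat.add_sub_cancel]
      module
    rw [hsplit]
    calc _ ≤ β * ((1 - β ^ k) * c) + (1 - β) * c := by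
          refine (norm_add_le _ _).trans (add_le_add ?_ ?_)
          · rw [norm_smul, Real.norm_of_nonneg hβ0]
            exact mul_le_mul_of_nonneg_left (ih (by omega)) hβ0
          · rw [norm_smul, Real.norm_of_nonneg (by linarith)]
            exact mul_le_mul_of_nonneg_left (hg _ hk') (by linarith)
      _ = (1 - β ^ (k + 1)) * c := by ring

theorem ema_sq_mem_Icc {β C : ℝ} (hβ0 : 0 ≤ β) (hβ1 : β ≤ 1) {n : ℕ} {x g : ℕ → ℝ}
    (hx0 : x 0 = 0) (hrec : ∀ k ∈ Icc 1 n, x k = β * x (k - 1) + (1 - β) * g k ^ 2)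
    (hg : ∀ k ∈ Icc 1 n, |g k| ≤ C) :
    ∀ k ≤ n, x k ∈ Set.Icc 0 ((1 - β ^ k) * C ^ 2) := by
  intro k hk
  -- `g k ^ 2 ∈ [0, C²]` says that it lies within `C² / 2` of the midpoint `C² / 2`
  have hdev := norm_ema_sub_le hβ0 hβ1 (C ^ 2 / 2) hx0 (g := fun k => g k ^ 2)
    (c := C ^ 2 / 2) (by simpa only [smul_eq_mul] using hrec) (fun k hk => by
      have := sq_le_sq' (abs_le.1 (hg k hk)).1 (abs_le.1 (hg k hk)).2
      rw [Real.norm_eq_abs, abs_le]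
      constructor <;> nlinarith [sq_nonneg (g k)]) k hk
  rw [Real.norm_eq_abs, smul_eq_mul, abs_le] at hdev
  constructor <;> nlinarith [hdev.1, hdev.2]

theorem norm_sub_le_of_norm_succ_sub_le {E : Type*} [SeminormedAddCommGroup E] {x : ℕ → E}
    {δ : ℝ} {a b : ℕ} (hab : a ≤ b) (h : ∀ k ∈ Ico a b, ‖x (k + 1) - x k‖ ≤ δ) :
    ‖x b - x a‖ ≤ (b - a : ℕ) * δ := by
  rw [← dist_eq_norm, dist_comm]
  calc dist (x a) (x b) ≤ ∑ k ∈ Ico a b, dist (x k) (x (k + 1)) := dist_le_Ico_sum_dist x hab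
    _ ≤ #(Ico a b) • δ := sum_le_card_nsmul _ _ _ fun k hk => by
          rw [dist_comm, dist_eq_norm]; exact h k hk
    _ = (b - a : ℕ) * δ := by rw [Nat.card_Ico, nsmul_eq_mul]

theorem le_sub_mul_of_le_sub {a : ℕ → ℝ} {δ : ℝ} {n : ℕ}
    (h : ∀ k ∈ Icc 1 n, a (k + 1) ≤ a k - δ) : a (n + 1) ≤ a 1 - n * δ := by
  induction n with
  | zero => simp
  | succ n ih =>
    have hprev := ih fun k hk => h k (Icc_subset_Icc_right (Nat.le_succ n) hk)
    have hlast := h (n + 1) (mem_Icc.2 ⟨by omega, le_rfl⟩)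
    push_cast
    linarith

theorem summable_of_descent {u a e : ℕ → ℝ} {c B : ℝ} (hc : 0 < c) (hu : ∀ t, B ≤ u t)
    (ha : ∀ t, 0 ≤ a t) (he0 : ∀ t, 0 ≤ e t) (he : Summable e)
    (hstep : ∀ t, u (t + 1) ≤ u t - c * a t + e t) : Summable a := by
  refine summable_of_sum_range_le (c := (u 0 - B + ∑' t, e t) / c) ha fun T => ?_
  have htele : c * ∑ t ∈ range T, a t ≤ u 0 - u T + ∑ t ∈ range T, e t := by
    rw [mul_sum, ← sum_range_sub' u, ← sum_add_distrib]
    exact sum_le_sum fun t _ => by linarith [hstep t]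
  have hpos := he.sum_le_tsum (range T) fun t _ => he0 t
  rw [← le_div_iff₀' hc] at htele
  exact htele.trans (div_le_div_of_nonneg_right (by linarith [hu T]) hc.le)

theorem liminf_eq_zero_of_summable_mul_sq {α u : ℕ → ℝ} {C : ℝ} (hα : ∀ t, 0 ≤ α t)
    (hdiv : ¬ Summable α) (hu0 : ∀ t, 0 ≤ u t) (huC : ∀ t, u t ≤ C)
    (hsum : Summable fun t => α t * u t ^ 2) : liminf u atTop = 0 := by
  refine le_antisymm (not_lt.1 fun hpos => hdiv ?_) (le_liminf_of_le
    (isBoundedUnder_of ⟨C, huC⟩).isCoboundedUnder_ge (.of_forall hu0))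
  set c := liminf u atTop
  refine (hsum.mul_left (4 / c ^ 2)).of_norm_bounded_eventually_nat ?_
  filter_upwards [eventually_lt_of_lt_liminf (half_lt_self hpos) (isBoundedUnder_of ⟨0, hu0⟩)]
    with t ht
  have hsq : (c / 2) ^ 2 ≤ u t ^ 2 := pow_le_pow_left₀ (by positivity) ht.le 2
  rw [Real.norm_of_nonneg (hα t)]
  calc α t = 4 / c ^ 2 * (α t * (c / 2) ^ 2) := by field_simp; ring
    _ ≤ 4 / c ^ 2 * (α t * u t ^ 2) := by gcongr; exact hα t


section Adam

variable {ι : Type*}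

def diagScale (s : ι → ℝ) (u : EuclideanSpace ℝ ι) : EuclideanSpace ℝ ι :=
  WithLp.toLp 2 fun i => s i * u i

theorem norm_diagScale_le [Fintype ι] {s : ι → ℝ} {M : ℝ} (hM : 0 ≤ M) (hs : ∀ i, |s i| ≤ M)
    (u : EuclideanSpace ℝ ι) : ‖diagScale s u‖ ≤ M * ‖u‖ := by
  refine (pow_le_pow_iff_left₀ (norm_nonneg _) (by positivity) two_ne_zero).1 ?_
  rw [mul_pow, EuclideanSpace.real_norm_sq_eq, EuclideanSpace.real_norm_sq_eq, mul_sum]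
  refine sum_le_sum fun i _ => ?_
  rw [diagScale, mul_pow]
  exact mul_le_mul_of_nonneg_right (sq_le_sq.2 ((hs i).trans (le_abs_self M))) (sq_nonneg _)

theorem inner_diagScale_ge [Fintype ι] {s : ι → ℝ} {μ M : ℝ} (hμ : 0 ≤ μ) (hM : 0 ≤ M)
    (hs : ∀ i, s i ∈ Set.Icc μ M) (h u : EuclideanSpace ℝ ι) :
    μ * ‖h‖ ^ 2 - M * ‖h‖ * ‖u - h‖ ≤ ⟪h, diagScale s u⟫_ℝ := by
  have hsplit : diagScale s u = diagScale s h + diagScale s (u - h) := by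
    ext i; simp only [diagScale, PiLp.add_apply, PiLp.sub_apply]; ring
  have hquad : μ * ‖h‖ ^ 2 ≤ ⟪h, diagScale s h⟫_ℝ := by
    rw [EuclideanSpace.real_norm_sq_eq, mul_sum, EuclideanSpace.inner_eq_star_dotProduct]
    refine sum_le_sum fun i _ => ?_
    simp only [diagScale, star_trivial]
    nlinarith [(hs i).1, sq_nonneg (h i)]
  have hcross : -(M * ‖h‖ * ‖u - h‖) ≤ ⟪h, diagScale s (u - h)⟫_ℝ := by
    have hnorm : ‖diagScale s (u - h)‖ ≤ M * ‖u - h‖ :=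
      norm_diagScale_le hM (fun i => abs_le.2 ⟨by linarith [(hs i).1], (hs i).2⟩) _
    have := mul_le_mul_of_nonneg_left hnorm (norm_nonneg h)
    linarith [neg_abs_le ⟪h, diagScale s (u - h)⟫_ℝ, abs_real_inner_le_norm h (diagScale s (u - h))]
  rw [hsplit, inner_add_right]
  linarith

/-- The Adam direction `m̃ / √(ṽ + ε)`, built from the bias-corrected moments
`m̃ = m / (1 - β₁ᵏ)` and `ṽ = v / (1 - β₂ᵏ)`. -/
noncomputable def adamDir (β₁ β₂ ε : ℝ) (k : ℕ) (m v : EuclideanSpace ℝ ι) : EuclideanSpace ℝ ι :=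
  diagScale (fun i => (√(v i / (1 - β₂ ^ k) + ε))⁻¹) ((1 - β₁ ^ k)⁻¹ • m)

theorem adam_update_eq {β₁ β₂ ε α : ℝ} {k : ℕ} {x x' m v : EuclideanSpace ℝ ι}
    (h : ∀ i, x' i = x i - α * (m i / (1 - β₁ ^ k)) / √(v i / (1 - β₂ ^ k) + ε)) :
    x' = x - α • adamDir β₁ β₂ ε k m v := by
  ext i
  rw [h i]
  simp only [adamDir, diagScale, PiLp.sub_apply, PiLp.smul_apply, smul_eq_mul]
  ring

theorem norm_adamDir_le [Fintype ι] {β₁ β₂ ε C : ℝ} {k : ℕ} {m v : EuclideanSpace ℝ ι} (hε : 0 < ε)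
    (hβ : 0 < 1 - β₁ ^ k) (hv : ∀ i, 0 ≤ v i / (1 - β₂ ^ k)) (hm : ‖m‖ ≤ (1 - β₁ ^ k) * C) :
    ‖adamDir β₁ β₂ ε k m v‖ ≤ C / √ε := by
  have hs : ∀ i, |(√(v i / (1 - β₂ ^ k) + ε))⁻¹| ≤ (√ε)⁻¹ := fun i => by
    rw [abs_of_nonneg (by positivity)]
    exact inv_anti₀ (Real.sqrt_pos.2 hε) (Real.sqrt_le_sqrt (by linarith [hv i]))
  calc _ ≤ (√ε)⁻¹ * ‖(1 - β₁ ^ k)⁻¹ • m‖ := norm_diagScale_le (by positivity) hs _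
    _ ≤ (√ε)⁻¹ * C := by
      rw [norm_smul, Real.norm_of_nonneg (inv_nonneg.2 hβ.le)]
      exact mul_le_mul_of_nonneg_left ((inv_mul_le_iff₀ hβ).2 hm) (by positivity)
    _ = C / √ε := inv_mul_eq_div _ _

theorem inner_adamDir_ge [Fintype ι] {β₁ β₂ ε C e : ℝ} {k : ℕ} {m v h : EuclideanSpace ℝ ι}
    (hε : 0 < ε) (hβ : 0 < 1 - β₁ ^ k) (hv : ∀ i, v i / (1 - β₂ ^ k) ∈ Set.Icc 0 (C ^ 2))
    (hm : ‖m - (1 - β₁ ^ k) • h‖ ≤ (1 - β₁ ^ k) * e) :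
    ‖h‖ ^ 2 / √(C ^ 2 + ε) - ‖h‖ * e / √ε ≤ ⟪h, adamDir β₁ β₂ ε k m v⟫_ℝ := by
  have hs : ∀ i, (√(v i / (1 - β₂ ^ k) + ε))⁻¹ ∈ Set.Icc (√(C ^ 2 + ε))⁻¹ (√ε)⁻¹ := fun i =>
    ⟨inv_anti₀ (Real.sqrt_pos.2 (by linarith [(hv i).1]))
      (Real.sqrt_le_sqrt (by linarith [(hv i).2])),
     inv_anti₀ (Real.sqrt_pos.2 hε) (Real.sqrt_le_sqrt (by linarith [(hv i).1]))⟩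
  have hmt : ‖(1 - β₁ ^ k)⁻¹ • m - h‖ ≤ e := by
    rw [← inv_smul_smul₀ hβ.ne' h, ← smul_sub, norm_smul,
      Real.norm_of_nonneg (inv_nonneg.2 hβ.le), inv_mul_le_iff₀ hβ]
    exact hm
  calc _ = (√(C ^ 2 + ε))⁻¹ * ‖h‖ ^ 2 - (√ε)⁻¹ * ‖h‖ * e := by ring
    _ ≤ (√(C ^ 2 + ε))⁻¹ * ‖h‖ ^ 2 - (√ε)⁻¹ * ‖h‖ * ‖(1 - β₁ ^ k)⁻¹ • m - h‖ := by gcongr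
    _ ≤ _ := inner_diagScale_ge (by positivity) (by positivity) hs h _

theorem adam_epoch_descent [Fintype ι] {F : EuclideanSpace ℝ ι → ℝ} {L : ℝ≥0}
    (hF : Differentiable ℝ F) (hlip : LipschitzWith L (gradient F)) {β₁ β₂ ε α C : ℝ}
    (hβ₁0 : 0 ≤ β₁) (hβ₁1 : β₁ < 1) (hβ₂0 : 0 ≤ β₂) (hβ₂1 : β₂ < 1) (hε : 0 < ε) (hα : 0 ≤ α)
    {m : ℕ} {w mm v g : ℕ → EuclideanSpace ℝ ι} (hm0 : mm 0 = 0) (hv0 : v 0 = 0)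
    (hmrec : ∀ k ∈ Icc 1 m, mm k = β₁ • mm (k - 1) + (1 - β₁) • g k)
    (hvrec : ∀ k ∈ Icc 1 m, ∀ i, v k i = β₂ * v (k - 1) i + (1 - β₂) * (g k i) ^ 2)
    (hwrec : ∀ k ∈ Icc 1 m, ∀ i,
      w (k + 1) i = w k i - α * (mm k i / (1 - β₁ ^ k)) / √(v k i / (1 - β₂ ^ k) + ε))
    (hgC : ∀ k ∈ Icc 1 m, ‖g k‖ ≤ C)
    (hgL : ∀ k ∈ Icc 1 m, ‖g k - gradient F (w 1)‖ ≤ L * ‖w k - w 1‖)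
    (hC : ‖gradient F (w 1)‖ ≤ C) :
    F (w (m + 1)) ≤ F (w 1) - m / √(C ^ 2 + ε) * (α * ‖gradient F (w 1)‖ ^ 2)
      + m * (L * (2 * m + 1) * (C / √ε) ^ 2) * α ^ 2 := by
  set h := gradient F (w 1)
  set Q := C / √ε
  have hαQ : 0 ≤ α * Q := mul_nonneg hα (div_nonneg ((norm_nonneg _).trans hC) (Real.sqrt_nonneg _))
  have hpos : ∀ {β : ℝ}, 0 ≤ β → β < 1 → ∀ k ∈ Icc 1 m, 0 < 1 - β ^ k := fun h0 h1 k hk =>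
    sub_pos.2 (pow_lt_one₀ h0 h1 (by have := (mem_Icc.1 hk).1; omega))
  have hv : ∀ k ∈ Icc 1 m, ∀ i, v k i / (1 - β₂ ^ k) ∈ Set.Icc 0 (C ^ 2) := by
    intro k hk i
    have hvk := ema_sq_mem_Icc hβ₂0 hβ₂1.le (x := fun k => v k i) (g := fun k => g k i)
      (by simp [hv0]) (fun k hk => hvrec k hk i)
      (fun k hk => (PiLp.norm_apply_le (g k) i).trans (hgC k hk)) k (mem_Icc.1 hk).2
    have hβ := hpos hβ₂0 hβ₂1 k hk
    exact ⟨div_nonneg hvk.1 hβ.le, (div_le_iff₀ hβ).2 (by linarith [hvk.2])⟩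
  have hmC : ∀ k ≤ m, ‖mm k‖ ≤ (1 - β₁ ^ k) * C := by
    simpa using norm_ema_sub_le hβ₁0 hβ₁1.le 0 hm0 hmrec (by simpa using hgC)
  have hdir : ∀ k ∈ Icc 1 m, ‖adamDir β₁ β₂ ε k (mm k) (v k)‖ ≤ Q := fun k hk =>
    norm_adamDir_le hε (hpos hβ₁0 hβ₁1 k hk) (fun i => (hv k hk i).1) (hmC k (mem_Icc.1 hk).2)
  have hupd : ∀ k ∈ Icc 1 m, w (k + 1) = w k - α • adamDir β₁ β₂ ε k (mm k) (v k) :=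
    fun k hk => adam_update_eq (hwrec k hk)
  have hdrift : ∀ k ∈ Icc 1 m, ‖w k - w 1‖ ≤ m * (α * Q) := by
    intro k hk
    obtain ⟨hk1, hkm⟩ := mem_Icc.1 hk
    calc ‖w k - w 1‖ ≤ (k - 1 : ℕ) * (α * Q) := norm_sub_le_of_norm_succ_sub_le hk1 fun j hj => by
          have hj' : j ∈ Icc 1 m := by simp only [mem_Ico, mem_Icc] at hj ⊢; omega
          rw [hupd j hj', sub_sub_cancel_left, norm_neg, norm_smul, Real.norm_of_nonneg hα]
          exact mul_le_mul_of_nonneg_left (hdir j hj') hα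
      _ ≤ m * (α * Q) := by gcongr; exact (Nat.sub_le k 1).trans hkm
  have hmerr : ∀ k ≤ m, ‖mm k - (1 - β₁ ^ k) • h‖ ≤ (1 - β₁ ^ k) * (L * (m * (α * Q))) :=
    norm_ema_sub_le hβ₁0 hβ₁1.le h hm0 hmrec fun k hk =>
      (hgL k hk).trans (by gcongr; exact hdrift k hk)
  have hstep : ∀ k ∈ Icc 1 m, F (w (k + 1)) ≤
      F (w k) - (α * ‖h‖ ^ 2 / √(C ^ 2 + ε) - L * (2 * m + 1) * Q ^ 2 * α ^ 2) := by
    intro k hk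
    have hinner := inner_adamDir_ge hε (hpos hβ₁0 hβ₁1 k hk) (hv k hk) (hmerr k (mem_Icc.1 hk).2)
    have hdesc := apply_sub_smul_le_of_inner_gradient_ge hF hlip hα (hdir k hk) (hdrift k hk) hinner
    have herr : ‖h‖ * (L * (m * (α * Q))) / √ε ≤ L * (m * (α * Q)) * Q := by
      rw [mul_comm, mul_div_assoc]
      gcongr
      exact div_le_div_of_nonneg_right hC (Real.sqrt_nonneg ε)
    rw [hupd k hk]
    linear_combination hdesc + mul_le_mul_of_nonneg_left herr hα
      + (1 / 2 : ℝ) * mul_nonneg L.coe_nonneg (sq_nonneg (α * Q))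
  calc F (w (m + 1))
        ≤ F (w 1) - m * (α * ‖h‖ ^ 2 / √(C ^ 2 + ε) - L * (2 * m + 1) * Q ^ 2 * α ^ 2) :=
        le_sub_mul_of_le_sub (a := fun k => F (w k)) hstep
    _ = _ := by ring

end Adam

theorem vradam_nonconvex_liminf_general
    (d N b m : ℕ) (hm : 0 < m)
    (f : Fin N → EuclideanSpace ℝ (Fin d) → ℝ) (L G : ℝ) (hG : 0 < G)
    (hdiff : ∀ n, Differentiable ℝ (f n))
    (hlip : ∀ n, LipschitzWith (Real.toNNReal L) (gradient (f n)))
    (hbdd : ∀ n x, ‖gradient (f n) x‖ ≤ G)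
    (β₁ β₂ ε : ℝ) (hβ₁0 : 0 ≤ β₁) (hβ₁1 : β₁ < 1) (hβ₂0 : 0 ≤ β₂) (hβ₂1 : β₂ < 1)
    (hε : 0 < ε)
    (Finf : ℝ) (hFinf : ∀ x, Finf ≤ fullLoss d N f x)
    (α : ℕ → ℝ) (hα : ∀ t, 0 < α t)
    (hdiv : ¬ Summable α) (hsq : Summable fun t => (α t) ^ 2)
    (B : ℕ → ℕ → Finset (Fin N)) (hB : ∀ t k, (B t k).card = b)
    (wt : ℕ → EuclideanSpace ℝ (Fin d))
    (w mm v g : ℕ → ℕ → EuclideanSpace ℝ (Fin d))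
    -- VRADAM inner loop with resetting (Option A)
    (hw1 : ∀ t : ℕ, 1 ≤ t → w t 1 = wt t)
    (hm0 : ∀ t, mm t 0 = 0) (hv0 : ∀ t, v t 0 = 0)
    (hg : ∀ t : ℕ, 1 ≤ t → ∀ k ∈ Finset.Icc 1 m,
      g t k = gradient (batchLoss d N b f (B t k)) (w t k)
        - gradient (batchLoss d N b f (B t k)) (wt t)
        + gradient (fullLoss d N f) (wt t))
    (hmrec : ∀ t : ℕ, 1 ≤ t → ∀ k ∈ Finset.Icc 1 m,
      mm t k = β₁ • mm t (k - 1) + (1 - β₁) • g t k)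
    (hvrec : ∀ t : ℕ, 1 ≤ t → ∀ k ∈ Finset.Icc 1 m, ∀ i,
      v t k i = β₂ * v t (k - 1) i + (1 - β₂) * (g t k i) ^ 2)
    (hwrec : ∀ t : ℕ, 1 ≤ t → ∀ k ∈ Finset.Icc 1 m, ∀ i,
      w t (k + 1) i = w t k i -
        α t * (mm t k i / (1 - β₁ ^ k)) / Real.sqrt (v t k i / (1 - β₂ ^ k) + ε))
    (hnext : ∀ t : ℕ, 1 ≤ t → wt (t + 1) = w t (m + 1)) :
    Filter.liminf (fun t => ‖gradient (fullLoss d N f) (wt t)‖) atTop = 0 := by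
  have hFdiff : Differentiable ℝ (fullLoss d N f) :=
    fullLoss_eq_avg d N f ▸ (Differentiable.fun_sum fun n _ => hdiff n).const_mul _
  have hFlip : LipschitzWith L.toNNReal (gradient (fullLoss d N f)) :=
    fullLoss_eq_avg d N f ▸ lipschitzWith_gradient_avg univ hdiff hlip
  have hFG : ∀ x, ‖gradient (fullLoss d N f) x‖ ≤ G :=
    fullLoss_eq_avg d N f ▸ norm_gradient_avg_le univ hdiff hG.le hbdd
  have hBG : ∀ t k x, ‖gradient (batchLoss d N b f (B t k)) x‖ ≤ G := fun t k =>
    batchLoss_eq_avg f (hB t k) ▸ norm_gradient_avg_le _ hdiff hG.le hbdd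
  have hBlip : ∀ t k, LipschitzWith L.toNNReal (gradient (batchLoss d N b f (B t k))) :=
    fun t k => batchLoss_eq_avg f (hB t k) ▸ lipschitzWith_gradient_avg _ hdiff hlip
  set F := fullLoss d N f
  set K := m * (L.toNNReal * (2 * m + 1) * (3 * G / √ε) ^ 2)
  have hepoch : ∀ t, F (wt (t + 1 + 1)) ≤ F (wt (t + 1)) - m / √((3 * G) ^ 2 + ε)
      * (α (t + 1) * ‖gradient F (wt (t + 1))‖ ^ 2) + K * α (t + 1) ^ 2 := by
    intro t
    have ht : 1 ≤ t + 1 := Nat.le_add_left 1 t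
    rw [hnext _ ht, ← hw1 _ ht]
    refine adam_epoch_descent hFdiff hFlip hβ₁0 hβ₁1 hβ₂0 hβ₂1 hε (hα _).le (hm0 _) (hv0 _)
      (hmrec _ ht) (hvrec _ ht) (hwrec _ ht) (fun k hk => ?_) (fun k hk => ?_)
      (by linarith [hFG (w (t + 1) 1)])
    · rw [hg _ ht k hk]
      exact norm_sub_add_le_three_mul (hBG _ k) (hFG _) _ _
    · rw [hg _ ht k hk, hw1 _ ht, add_sub_cancel_right]
      exact (hBlip _ k).norm_sub_le _ _
  have hsum : Summable fun t => α t * ‖gradient F (wt t)‖ ^ 2 :=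
    (summable_nat_add_iff 1).1 <| summable_of_descent (u := fun t => F (wt (t + 1)))
      (div_pos (Nat.cast_pos.2 hm) (Real.sqrt_pos.2 (by positivity))) (fun t => hFinf _)
      (fun t => mul_nonneg (hα _).le (sq_nonneg _)) (fun t => by positivity)
      (((summable_nat_add_iff 1).2 hsq).mul_left K) hepoch
  exact liminf_eq_zero_of_summable_mul_sq (fun t => (hα t).le) hdiv (fun t => norm_nonneg _)
    (fun t => hFG (wt t)) hsum

/-- Convergence of VRADAM (Option A) for lower-bounded objectives: if `F ≥ F_inf`,
`∑ α_t = ∞` and `∑ α_t² < ∞`, then for every initial point and every choice of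
mini-batches, `liminf_{t→∞} ‖∇F(w̃_t)‖ = 0`. -/
theorem vradam_nonconvex_liminf
    (d N b m : ℕ) (hN : 0 < N) (hb : 0 < b) (hm : 0 < m)
    (f : Fin N → EuclideanSpace ℝ (Fin d) → ℝ) (L G : ℝ) (hL : 0 < L) (hG : 0 < G)
    (hdiff : ∀ n, Differentiable ℝ (f n))
    (hlip : ∀ n, LipschitzWith (Real.toNNReal L) (gradient (f n)))
    (hbdd : ∀ n x, ‖gradient (f n) x‖ ≤ G)
    (β₁ β₂ ε : ℝ) (hβ₁0 : 0 ≤ β₁) (hβ₁1 : β₁ < 1) (hβ₂0 : 0 ≤ β₂) (hβ₂1 : β₂ < 1)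
    (hε : 0 < ε)
    (Finf : ℝ) (hFinf : ∀ x, Finf ≤ fullLoss d N f x)
    (α : ℕ → ℝ) (hα : ∀ t, 0 < α t)
    (hdiv : ¬ Summable α) (hsq : Summable fun t => (α t) ^ 2)
    (B : ℕ → ℕ → Finset (Fin N)) (hB : ∀ t k, (B t k).card = b)
    (wt : ℕ → EuclideanSpace ℝ (Fin d))
    (w mm v g : ℕ → ℕ → EuclideanSpace ℝ (Fin d))
    -- VRADAM inner loop with resetting (Option A)
    (hw1 : ∀ t : ℕ, 1 ≤ t → w t 1 = wt t)
    (hm0 : ∀ t, mm t 0 = 0) (hv0 : ∀ t, v t 0 = 0)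
    (hg : ∀ t : ℕ, 1 ≤ t → ∀ k ∈ Finset.Icc 1 m,
      g t k = gradient (batchLoss d N b f (B t k)) (w t k)
        - gradient (batchLoss d N b f (B t k)) (wt t)
        + gradient (fullLoss d N f) (wt t))
    (hmrec : ∀ t : ℕ, 1 ≤ t → ∀ k ∈ Finset.Icc 1 m,
      mm t k = β₁ • mm t (k - 1) + (1 - β₁) • g t k)
    (hvrec : ∀ t : ℕ, 1 ≤ t → ∀ k ∈ Finset.Icc 1 m, ∀ i,
      v t k i = β₂ * v t (k - 1) i + (1 - β₂) * (g t k i) ^ 2)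
    (hwrec : ∀ t : ℕ, 1 ≤ t → ∀ k ∈ Finset.Icc 1 m, ∀ i,
      w t (k + 1) i = w t k i -
        α t * (mm t k i / (1 - β₁ ^ k)) / Real.sqrt (v t k i / (1 - β₂ ^ k) + ε))
    (hnext : ∀ t : ℕ, 1 ≤ t → wt (t + 1) = w t (m + 1)) :
    Filter.liminf (fun t => ‖gradient (fullLoss d N f) (wt t)‖) atTop = 0 :=
  vradam_nonconvex_liminf_general d N b m hm f L G hG hdiff hlip hbdd β₁ β₂ ε hβ₁0 hβ₁1 hβ₂0 hβ₂1 hε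
    Finf hFinf α hα hdiv hsq B hB wt w mm v g hw1 hm0 hv0 hg hmrec hvrec hwrec hnext
end

section
/- Let α > 0, β₁ ∈ [0,1), and α_t = α/t. Then there exists a constant C̄ > 0 such that for all integers t ≥ 2, ∑_{j=1}^{t−1} α_j β₁^{t−j} ≤ C̄ α_t, i.e., ∑_{j=1}^{t−1} (α/j) β₁^{t−j} ≤ C̄ α/t. -/
/-!
Writing `k = t - j`, one has `t = j + k ≤ j (k + 1)`, so `α / j ≤ (α / t) (k + 1)`. Hence the sum
is at most `α / t` times a partial sum of `∑ (k + 1) β₁ ^ k = 1 / (1 - β₁) ^ 2`, which is `C̄`.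
-/

open Finset

lemma div_le_div_add_mul_succ {α : ℝ} (hα : 0 ≤ α) {j : ℕ} (hj : 1 ≤ j) (k : ℕ) :
    α / j ≤ α / (j + k : ℕ) * (k + 1 : ℕ) := by
  have hjk : ((j + k : ℕ) : ℝ) ≤ j * (k + 1 : ℕ) := by
    exact_mod_cast (by nlinarith : j + k ≤ j * (k + 1))
  rw [div_mul_eq_mul_div, div_le_div_iff₀ (by positivity) (by positivity)]
  nlinarith

lemma sum_Icc_sub_le_of_hasSum {g : ℕ → ℝ} {a : ℝ} (hg : HasSum g a) (hg0 : ∀ k, 0 ≤ g k)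
    (t : ℕ) : ∑ j ∈ Icc 1 (t - 1), g (t - j) ≤ a := by
  have hinj : Set.InjOn (t - ·) (Icc 1 (t - 1) : Set ℕ) := fun i hi j hj h => by
    simp only [coe_Icc, Set.mem_Icc] at hi hj
    lia
  rw [← sum_image hinj]
  exact sum_le_hasSum _ (fun k _ => hg0 k) hg

lemma hasSum_succ_mul_geometric {𝕜 : Type*} [NormedDivisionRing 𝕜] {r : 𝕜} (hr : ‖r‖ < 1) :
    HasSum (fun k : ℕ => ((k + 1 : ℕ) : 𝕜) * r ^ k) (1 / (1 - r) ^ 2) := by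
  simpa using hasSum_choose_mul_geometric_of_norm_lt_one 1 hr

/-- For the step-size schedule `α_t = α / t` and `β₁ ∈ [0,1)`, there is a constant `C̄ > 0`
such that for all `t ≥ 2`, `∑_{j=1}^{t-1} (α/j) β₁^{t-j} ≤ C̄ · α/t`. -/
theorem sum_stepsize_beta_le (α β₁ : ℝ) (hα : 0 < α) (hβ₁0 : 0 ≤ β₁) (hβ₁1 : β₁ < 1) :
    ∃ C : ℝ, 0 < C ∧ ∀ t : ℕ, 2 ≤ t →
      ∑ j ∈ Finset.Icc 1 (t - 1), (α / (j : ℝ)) * β₁ ^ (t - j) ≤ C * (α / (t : ℝ)) := by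
  have hgeom := hasSum_succ_mul_geometric (r := β₁) (by rwa [Real.norm_of_nonneg hβ₁0])
  refine ⟨1 / (1 - β₁) ^ 2, by have := sub_pos.2 hβ₁1; positivity, fun t _ => ?_⟩
  calc ∑ j ∈ Icc 1 (t - 1), α / j * β₁ ^ (t - j)
      ≤ ∑ j ∈ Icc 1 (t - 1), α / t * (((t - j + 1 : ℕ) : ℝ) * β₁ ^ (t - j)) := by
        refine sum_le_sum fun j hj => ?_
        obtain ⟨hj1, hjt⟩ := mem_Icc.1 hj
        have hterm := div_le_div_add_mul_succ hα.le hj1 (t - j)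
        rw [Nat.add_sub_cancel' (by lia)] at hterm
        rw [← mul_assoc]
        gcongr
    _ = α / t * ∑ j ∈ Icc 1 (t - 1), ((t - j + 1 : ℕ) : ℝ) * β₁ ^ (t - j) := (mul_sum ..).symm
    _ ≤ α / t * (1 / (1 - β₁) ^ 2) := by
        gcongr
        exact sum_Icc_sub_le_of_hasSum hgeom (fun k => by positivity) t
    _ = 1 / (1 - β₁) ^ 2 * (α / t) := mul_comm ..
end

section
/- For every real A with 0 < A < 1 and every integer T ≥ 2, the sum ν_{T−1} = ∑_{t=1}^{T−1} (1/t²) ∏_{j=t+1}^{T−1} (1 − A/j) satisfies ν_{T−1} ≤ 2^A · ((2 − A)/(1 − A)) · T^{−A} (in particular ν_{T−1} = O(T^{−A})). -/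
/-!
Since `y ^ p = exp (p log y) ≥ 1 + p log y` and `log y ≤ y - 1`, each factor satisfies
`1 - A/j ≤ (j/(j+1))^A`; the inner product therefore telescopes to at most `((t+1)/T)^A ≤ (2t/T)^A`,
and the `t`-th term is at most `2^A T^(-A) t^(A-2)`. The same two facts give
`(1-A) t^(A-2) ≤ (t-1)^(A-1) - t^(A-1)`, so `∑ t^(A-2)` telescopes to at most `1 + 1/(1-A)`.
-/

open Finset Real

lemma one_add_mul_log_le_rpow {y : ℝ} (hy : 0 < y) (p : ℝ) : 1 + p * log y ≤ y ^ p := by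
  rw [rpow_def_of_pos hy, mul_comm]
  linarith [add_one_le_exp (log y * p)]

lemma one_sub_div_le_rpow_div_add_one {A x : ℝ} (hA : 0 ≤ A) (hx : 0 < x) :
    1 - A / x ≤ (x / (x + 1)) ^ A := by
  have hlog : -(1 / x) ≤ log (x / (x + 1)) := by
    have h := one_sub_inv_le_log_of_pos (show 0 < x / (x + 1) by positivity)
    rwa [inv_div, show 1 - (x + 1) / x = -(1 / x) by field_simp; ring] at h
  calc 1 - A / x = 1 + A * -(1 / x) := by ring
    _ ≤ 1 + A * log (x / (x + 1)) := by gcongr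
    _ ≤ (x / (x + 1)) ^ A := one_add_mul_log_le_rpow (by positivity) A

lemma sub_one_mul_rpow_neg_le_rpow_sub_rpow {s x : ℝ} (hs : 1 ≤ s) (hx : 1 < x) :
    (s - 1) * x ^ (-s) ≤ (x - 1) ^ (1 - s) - x ^ (1 - s) := by
  have hx0 : 0 < x := by linarith
  have hpos : 0 < (x - 1) / x := div_pos (by linarith) hx0
  have hlog : log ((x - 1) / x) ≤ -(1 / x) := by
    have h := log_le_sub_one_of_pos hpos
    rwa [show (x - 1) / x - 1 = -(1 / x) by field_simp; ring] at h
  have hratio : 1 + (s - 1) / x ≤ ((x - 1) / x) ^ (1 - s) :=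
    calc 1 + (s - 1) / x = 1 + (1 - s) * -(1 / x) := by ring
      _ ≤ 1 + (1 - s) * log ((x - 1) / x) := by
        linarith [mul_le_mul_of_nonpos_left hlog (by linarith : 1 - s ≤ 0)]
      _ ≤ ((x - 1) / x) ^ (1 - s) := one_add_mul_log_le_rpow hpos _
  have hsplit : (x - 1) ^ (1 - s) = ((x - 1) / x) ^ (1 - s) * x ^ (1 - s) := by
    rw [← mul_rpow hpos.le hx0.le, div_mul_cancel₀ _ hx0.ne']
  have hneg : x ^ (-s) = x ^ (1 - s) / x := by
    rw [← rpow_sub_one hx0.ne']; ring_nf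
  rw [hsplit, hneg]
  have := mul_le_mul_of_nonneg_right hratio (rpow_nonneg hx0.le (1 - s))
  calc (s - 1) * (x ^ (1 - s) / x) = (1 + (s - 1) / x) * x ^ (1 - s) - x ^ (1 - s) := by ring
    _ ≤ _ := by linarith

lemma sum_Icc_rpow_neg_le_sub {s : ℝ} (hs : 1 < s) {n : ℕ} (hn : 1 ≤ n) :
    ∑ t ∈ Icc 1 n, (t : ℝ) ^ (-s) ≤ (s - (n : ℝ) ^ (1 - s)) / (s - 1) := by
  have hs1 : 0 < s - 1 := by linarith
  induction n, hn using Nat.le_induction with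
  | base => rw [le_div_iff₀ hs1]; simp
  | succ n hn ih =>
    have hstep := sub_one_mul_rpow_neg_le_rpow_sub_rpow hs.le
      (by linarith [(Nat.one_le_cast (α := ℝ)).mpr hn] : (1 : ℝ) < n + 1)
    rw [add_sub_cancel_right] at hstep
    rw [sum_Icc_succ_top (by omega), Nat.cast_succ]
    calc _ ≤ (s - (n : ℝ) ^ (1 - s)) / (s - 1) + ((n : ℝ) + 1) ^ (-s) := by gcongr
      _ ≤ (s - ((n : ℝ) + 1) ^ (1 - s)) / (s - 1) := by
        rw [div_add' _ _ _ hs1.ne', div_le_div_iff_of_pos_right hs1]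
        linarith

lemma sum_Icc_rpow_neg_le {s : ℝ} (hs : 1 < s) (n : ℕ) :
    ∑ t ∈ Icc 1 n, (t : ℝ) ^ (-s) ≤ s / (s - 1) := by
  rcases Nat.eq_zero_or_pos n with rfl | hn
  · simp only [Icc_eq_empty_of_lt zero_lt_one, sum_empty]
    exact div_nonneg (by linarith) (by linarith)
  · refine (sum_Icc_rpow_neg_le_sub hs hn).trans (div_le_div_of_nonneg_right ?_ (by linarith))
    linarith [rpow_nonneg (Nat.cast_nonneg n) (1 - s)]

lemma prod_Ico_one_sub_div_le_rpow {A : ℝ} (hA : 0 ≤ A) {a b : ℕ} (ha0 : 0 < a) (ha : A ≤ a)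
    (hab : a ≤ b) : ∏ j ∈ Ico a b, (1 - A / j) ≤ ((a : ℝ) / b) ^ A := by
  induction b, hab using Nat.le_induction with
  | base => simp [div_self (show (a : ℝ) ≠ 0 by positivity)]
  | succ b hab ih =>
    have hb0 : (0 : ℝ) < b := by exact_mod_cast ha0.trans_le hab
    have hfactor : 0 ≤ 1 - A / b := by
      rw [sub_nonneg, div_le_one hb0]
      exact ha.trans (by exact_mod_cast hab)
    rw [prod_Ico_succ_top hab, Nat.cast_succ]
    calc _ ≤ ((a : ℝ) / b) ^ A * ((b : ℝ) / (b + 1)) ^ A :=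
          mul_le_mul ih (one_sub_div_le_rpow_div_add_one hA hb0) hfactor (by positivity)
      _ = ((a : ℝ) / (b + 1)) ^ A := by
        rw [← mul_rpow (by positivity) (by positivity)]
        congr 1
        field_simp

lemma one_div_sq_mul_prod_Icc_le {A : ℝ} (hA0 : 0 ≤ A) (hA1 : A ≤ 1) {t T : ℕ} (ht : 1 ≤ t)
    (htT : t < T) :
    1 / (t : ℝ) ^ 2 * ∏ j ∈ Icc (t + 1) (T - 1), (1 - A / (j : ℝ)) ≤
      2 ^ A * (T : ℝ) ^ (-A) * (t : ℝ) ^ (-(2 - A)) := by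
  have ht0 : (0 : ℝ) < t := by exact_mod_cast ht
  have hT0 : (0 : ℝ) < T := Nat.cast_pos.mpr (by omega)
  have hIcc : Icc (t + 1) (T - 1) = Ico (t + 1) T := by ext; simp; omega
  have hprod := prod_Ico_one_sub_div_le_rpow hA0 t.succ_pos
    (by push_cast; linarith) (Nat.succ_le_of_lt htT)
  rw [hIcc]
  calc _ ≤ 1 / (t : ℝ) ^ 2 * (((t + 1 : ℕ) : ℝ) / T) ^ A := by gcongr
    _ ≤ 1 / (t : ℝ) ^ 2 * (2 * t / T) ^ A := by
      gcongr
      push_cast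
      linarith [(Nat.one_le_cast (α := ℝ)).mpr ht]
    _ = 2 ^ A * (T : ℝ) ^ (-A) * (t : ℝ) ^ (-(2 - A)) := by
      rw [div_rpow (by positivity) hT0.le, mul_rpow zero_le_two ht0.le, rpow_neg hT0.le,
        rpow_neg ht0.le, rpow_sub ht0, rpow_two]
      field_simp

theorem sum_prod_one_sub_div_le_rpow_general (A : ℝ) (hA0 : 0 < A) (hA1 : A < 1)
    (T : ℕ) :
    ∑ t ∈ Finset.Icc 1 (T - 1),
        (1 / (t : ℝ) ^ 2) * ∏ j ∈ Finset.Icc (t + 1) (T - 1), (1 - A / (j : ℝ)) ≤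
      (2 : ℝ) ^ A * ((2 - A) / (1 - A)) * (T : ℝ) ^ (-A) := by
  calc _ ≤ ∑ t ∈ Icc 1 (T - 1), 2 ^ A * (T : ℝ) ^ (-A) * (t : ℝ) ^ (-(2 - A)) := by
        refine sum_le_sum fun t ht => ?_
        rw [mem_Icc] at ht
        exact one_div_sq_mul_prod_Icc_le hA0.le hA1.le ht.1 (by omega)
    _ = 2 ^ A * (T : ℝ) ^ (-A) * ∑ t ∈ Icc 1 (T - 1), (t : ℝ) ^ (-(2 - A)) := by
        rw [mul_sum]
    _ ≤ 2 ^ A * (T : ℝ) ^ (-A) * ((2 - A) / (2 - A - 1)) := by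
        gcongr
        exact sum_Icc_rpow_neg_le (by linarith) _
    _ = (2 : ℝ) ^ A * ((2 - A) / (1 - A)) * (T : ℝ) ^ (-A) := by ring_nf

/-- For `0 < A < 1` and integers `T ≥ 2`,
`∑_{t=1}^{T-1} (1/t²) ∏_{j=t+1}^{T-1} (1 - A/j) ≤ 2^A · ((2-A)/(1-A)) · T^{-A}`. -/
theorem sum_prod_one_sub_div_le_rpow (A : ℝ) (hA0 : 0 < A) (hA1 : A < 1)
    (T : ℕ) (hT : 2 ≤ T) :
    ∑ t ∈ Finset.Icc 1 (T - 1),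
        (1 / (t : ℝ) ^ 2) * ∏ j ∈ Finset.Icc (t + 1) (T - 1), (1 - A / (j : ℝ)) ≤
      (2 : ℝ) ^ A * ((2 - A) / (1 - A)) * (T : ℝ) ^ (-A) :=
  sum_prod_one_sub_div_le_rpow_general A hA0 hA1 T
end

section
/- Let 0 < A < 1 and B ≥ 0, and let (e_t)_{t≥1} be a sequence of nonnegative reals satisfying e_{t+1} ≤ (1 − A/t)·e_t + B/t² for all t ≥ 1. Then for every T ≥ 2, e_T ≤ T^{−A}·e₁ + B·2^A·((2 − A)/(1 − A))·T^{−A}; in particular e_T = O(T^{−A}). -/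
/-!
Multiply the recursion by `(t + 1) ^ A`. Bernoulli's inequality gives
`(1 - A / t) (t + 1) ^ A ≤ t ^ A`, so the weighted error `u_t = t ^ A e_t` grows by at most
`2 ^ A B t ^ (A - 2)` per step. Since `A < 1`, these increments are summable: convexity of
`x ↦ x ^ (A - 1)` bounds `(1 - A) (t + 1) ^ (A - 2)` by the telescoping difference
`t ^ (A - 1) - (t + 1) ^ (A - 1)`, whence `∑ t ^ (A - 2) ≤ 1 + 1 / (1 - A)`.
-/

open Finset Real

lemma one_add_mul_le_one_sub_rpow_neg {p y : ℝ} (hp0 : 0 ≤ p) (hp1 : p ≤ 1) (hy0 : 0 ≤ y)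
    (hy1 : y < 1) : 1 + p * y ≤ (1 - y) ^ (-p) := by
  have hpy : p * y < 1 := by nlinarith
  have hbern : (1 - y) ^ p ≤ 1 - p * y := by
    simpa [sub_eq_add_neg] using rpow_one_add_le_one_add_mul_self (s := -y) (by linarith) hp0 hp1
  rw [rpow_neg (by linarith), le_inv_comm₀ (by nlinarith) (rpow_pos_of_pos (by linarith) p)]
  calc (1 - y) ^ p ≤ 1 - p * y := hbern
    _ ≤ (1 + p * y)⁻¹ := by
      rw [← one_div, le_div_iff₀ (by positivity)]
      nlinarith [mul_self_nonneg (p * y)]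

lemma one_sub_div_mul_add_one_rpow_le {A x : ℝ} (hA0 : 0 ≤ A) (hA1 : A ≤ 1) (hx : A ≤ x)
    (hx0 : 0 < x) : (1 - A / x) * (x + 1) ^ A ≤ x ^ A := by
  have hbern : (x + 1) ^ A ≤ x ^ A * (1 + A / x) := by
    calc (x + 1) ^ A = x ^ A * (1 + 1 / x) ^ A := by
          rw [← mul_rpow hx0.le (by positivity)]; field_simp
      _ ≤ x ^ A * (1 + A / x) := by
          gcongr
          have hs : -1 ≤ 1 / x := by have := one_div_pos.2 hx0; linarith
          simpa [div_eq_mul_inv] using rpow_one_add_le_one_add_mul_self hs hA0 hA1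
  have hxA : 0 < x ^ A := rpow_pos_of_pos hx0 A
  calc (1 - A / x) * (x + 1) ^ A ≤ (1 - A / x) * (x ^ A * (1 + A / x)) := by
        gcongr
        rw [sub_nonneg, div_le_one hx0]; exact hx
    _ = x ^ A * (1 - (A / x) ^ 2) := by ring
    _ ≤ x ^ A := by nlinarith [sq_nonneg (A / x)]

lemma add_one_rpow_le_two_rpow_mul_rpow {A x : ℝ} (hA : 0 ≤ A) (hx : 1 ≤ x) :
    (x + 1) ^ A ≤ 2 ^ A * x ^ A := by
  rw [← mul_rpow zero_le_two (by linarith)]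
  gcongr; linarith

lemma rpow_sub_one_add_le_rpow_sub_one {A x : ℝ} (hA0 : 0 ≤ A) (hA1 : A ≤ 1) (hx : 0 < x) :
    (1 - A) * (x + 1) ^ (A - 2) + (x + 1) ^ (A - 1) ≤ x ^ (A - 1) := by
  have hx1 : 0 < x + 1 := by linarith
  have hy : 1 / (x + 1) < 1 := by rw [div_lt_one hx1]; linarith
  have key := one_add_mul_le_one_sub_rpow_neg (p := 1 - A) (by linarith) (by linarith)
    (by positivity) hy
  calc (1 - A) * (x + 1) ^ (A - 2) + (x + 1) ^ (A - 1)
      = (x + 1) ^ (A - 1) * (1 + (1 - A) * (1 / (x + 1))) := by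
        rw [show A - 2 = (A - 1) - 1 by ring, rpow_sub_one hx1.ne']; ring
    _ ≤ (x + 1) ^ (A - 1) * (1 - 1 / (x + 1)) ^ (-(1 - A)) := by gcongr
    _ = x ^ (A - 1) := by
        rw [neg_sub, ← mul_rpow hx1.le (by rw [sub_nonneg]; exact hy.le)]
        congr 1; field_simp; ring

lemma add_one_rpow_mul_le_of_le_one_sub_div_mul_add {A B x a b : ℝ} (hA0 : 0 ≤ A)
    (hA1 : A ≤ 1) (hB : 0 ≤ B) (hx : 1 ≤ x) (ha : 0 ≤ a)
    (hb : b ≤ (1 - A / x) * a + B / x ^ 2) :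
    (x + 1) ^ A * b ≤ x ^ A * a + 2 ^ A * B * x ^ (A - 2) := by
  have hx0 : 0 < x := by linarith
  have hcontract := one_sub_div_mul_add_one_rpow_le hA0 hA1 (hA1.trans hx) hx0
  have hdouble := add_one_rpow_le_two_rpow_mul_rpow hA0 hx
  calc (x + 1) ^ A * b ≤ (x + 1) ^ A * ((1 - A / x) * a + B / x ^ 2) := by gcongr
    _ = (1 - A / x) * (x + 1) ^ A * a + (x + 1) ^ A * B / x ^ 2 := by ring
    _ ≤ x ^ A * a + 2 ^ A * x ^ A * B / x ^ 2 := by gcongr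
    _ = x ^ A * a + 2 ^ A * B * x ^ (A - 2) := by
        rw [show A - 2 = A - (2 : ℕ) by norm_num, rpow_sub_natCast hx0.ne']; ring

lemma sum_range_add_one_rpow_sub_two_le {A : ℝ} (hA0 : 0 ≤ A) (hA1 : A < 1) (n : ℕ) :
    ∑ k ∈ range n, ((k : ℝ) + 1) ^ (A - 2) ≤ (2 - A) / (1 - A) := by
  have h1A : 0 < 1 - A := by linarith
  cases n with
  | zero => simpa using div_nonneg (by linarith : (0 : ℝ) ≤ 2 - A) h1A.le
  | succ m =>
    have htail : (1 - A) * ∑ k ∈ range m, ((k : ℝ) + 1 + 1) ^ (A - 2) ≤ 1 := by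
      calc (1 - A) * ∑ k ∈ range m, ((k : ℝ) + 1 + 1) ^ (A - 2)
          ≤ ∑ k ∈ range m,
              (((k : ℝ) + 1) ^ (A - 1) - (((k + 1 : ℕ) : ℝ) + 1) ^ (A - 1)) := by
            rw [mul_sum]
            gcongr with k
            have := rpow_sub_one_add_le_rpow_sub_one hA0 hA1.le (x := (k : ℝ) + 1) (by positivity)
            push_cast
            linarith
        _ = 1 - ((m : ℝ) + 1) ^ (A - 1) := by
            rw [sum_range_sub' (fun k : ℕ => ((k : ℝ) + 1) ^ (A - 1))]; simp
        _ ≤ 1 := by linarith [rpow_nonneg (by positivity : (0 : ℝ) ≤ (m : ℝ) + 1) (A - 1)]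
    rw [sum_range_succ']
    push_cast
    rw [zero_add, one_rpow, le_div_iff₀ h1A]
    linarith

/-- Recursive contraction estimate: if `0 < A < 1`, `B ≥ 0`, and a nonnegative sequence
satisfies `e_{t+1} ≤ (1 - A/t) e_t + B/t²` for all `t ≥ 1`, then for every `T ≥ 2`,
`e_T ≤ T^{-A} e₁ + B · 2^A · ((2-A)/(1-A)) · T^{-A}`. -/
theorem recursive_contraction (A B : ℝ) (hA0 : 0 < A) (hA1 : A < 1) (hB : 0 ≤ B)
    (e : ℕ → ℝ) (he : ∀ t, 0 ≤ e t)
    (hrec : ∀ t : ℕ, 1 ≤ t → e (t + 1) ≤ (1 - A / (t : ℝ)) * e t + B / (t : ℝ) ^ 2) :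
    ∀ T : ℕ, 2 ≤ T →
      e T ≤ (T : ℝ) ^ (-A) * e 1 + B * (2 : ℝ) ^ A * ((2 - A) / (1 - A)) * (T : ℝ) ^ (-A) := by
  intro T hT
  obtain ⟨n, rfl⟩ : ∃ n, T = n + 1 := ⟨T - 1, by omega⟩
  set u : ℕ → ℝ := fun k => ((k : ℝ) + 1) ^ A * e (k + 1) with hu
  have hstep (k : ℕ) : u (k + 1) - u k ≤ 2 ^ A * B * ((k : ℝ) + 1) ^ (A - 2) := by
    have := add_one_rpow_mul_le_of_le_one_sub_div_mul_add hA0.le hA1.le hB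
      (le_add_of_nonneg_left k.cast_nonneg) (he (k + 1))
      (by exact_mod_cast hrec (k + 1) (by omega))
    simp only [hu]
    push_cast
    linarith
  have htel : u n ≤ e 1 + 2 ^ A * B * ∑ k ∈ range n, ((k : ℝ) + 1) ^ (A - 2) := by
    have := sum_le_sum fun k (_ : k ∈ range n) => hstep k
    rw [sum_range_sub, ← mul_sum] at this
    simp only [hu, CharP.cast_eq_zero, zero_add, one_rpow, one_mul] at this ⊢
    linarith
  have hsum := sum_range_add_one_rpow_sub_two_le hA0.le hA1 n
  have hn : (0 : ℝ) < ((n + 1 : ℕ) : ℝ) := by positivity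
  calc e (n + 1) = ((n + 1 : ℕ) : ℝ) ^ (-A) * u n := by
        rw [hu, rpow_neg hn.le]; push_cast
        rw [inv_mul_cancel_left₀ (rpow_pos_of_pos (by positivity) A).ne']
    _ ≤ ((n + 1 : ℕ) : ℝ) ^ (-A) * (e 1 + 2 ^ A * B * ((2 - A) / (1 - A))) := by
        gcongr; exact htel.trans (by gcongr)
    _ = _ := by ring
end
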